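/- arXiv:1711.07931 — 11 statements merged into one kernel-verified Lean document; each statement's English description precedes it below -/
import Mathlib

section
/- Let H be a complex Hilbert space, T : H →L[ℂ] H a bounded operator, n a natural number, and suppose (i) the origin (0,...,0) in ℂⁿ does not lie in the interior of the convex hull of the joint numerical range W(T, T², ..., Tⁿ), and (ii) there exists a unit vector x ∈ H with ⟨Tᵏx, x⟩ = 0 for all k = 1, ..., 2n. Then T has an eigenvalue, i.e., the point spectrum of T is nonempty. -/
/-!
Separating `0` from the convex hull of `W(T, …, Tⁿ)` gives a nonzero real functional that is
nonnegative on `W(T, …, Tⁿ)`. Written as `w ↦ Re ∑ₖ β̄ₖ wₖ`, it says that `A = p(T)` is accretive,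
`Re ⟪A y, y⟫ ≥ 0`, where `p = ∑ₖ βₖ X^(k+1)` is a nonzero polynomial of degree at most `n`
with `p(0) = 0`. The vanishing moments give `⟪A x, x⟫ = 0` and `⟪A² x, x⟫ = 0` (as `p²` has its
support in `[2, 2n]`). For an accretive operator, `⟪A x, x⟫ = 0` forces `⟪A x, v⟫ = -⟪x, A v⟫`
for all `v`, so `‖A x‖² = -⟪x, A² x⟫ = 0`. Thus `p(T) x = 0` with `x ≠ 0`, and one of the linear
factors of `p` has a nontrivial kernel.
-/

open RCLike Polynomial ComplexConjugate

theorem exists_dual_ne_zero_eqOn_of_affineSpan_ne_top {k E : Type*} [Field k]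
    [AddCommGroup E] [Module k E] {S : Set E} {w₀ : E} (hw₀ : w₀ ∈ S)
    (hS : affineSpan k S ≠ ⊤) : ∃ f : Module.Dual k E, f ≠ 0 ∧ ∀ w ∈ S, f w = f w₀ := by
  have hdir : (affineSpan k S).direction < ⊤ := by
    rw [lt_top_iff_ne_top, Ne, AffineSubspace.direction_eq_top_iff_of_nonempty
      ((affineSpan_nonempty k).2 ⟨w₀, hw₀⟩)]
    exact hS
  obtain ⟨f, hf0, hf⟩ := Submodule.exists_dual_map_eq_bot_of_lt_top hdir inferInstance
  refine ⟨f, hf0, fun w hw => ?_⟩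
  have hmem : w -ᵥ w₀ ∈ (affineSpan k S).direction :=
    AffineSubspace.vsub_mem_direction (subset_affineSpan k S hw) (subset_affineSpan k S hw₀)
  have := Submodule.mem_map_of_mem (f := f) hmem
  rwa [hf, Submodule.mem_bot, vsub_eq_sub, map_sub, sub_eq_zero] at this

theorem exists_dual_ne_zero_nonneg_of_zero_notMem_interior_convexHull {E : Type*}
    [NormedAddCommGroup E] [NormedSpace ℝ E] [FiniteDimensional ℝ E] {S : Set E}
    (hS : S.Nonempty) (h0 : (0 : E) ∉ interior (convexHull ℝ S)) :
    ∃ f : Module.Dual ℝ E, f ≠ 0 ∧ ∀ w ∈ S, 0 ≤ f w := by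
  by_cases hint : (interior (convexHull ℝ S)).Nonempty
  · obtain ⟨f, hf0, hf⟩ :=
      geometric_hahn_banach_of_nonempty_interior_point (convex_convexHull ℝ S) h0 hint
    refine ⟨-(f : E →ₗ[ℝ] ℝ), neg_ne_zero.2 fun h => hf0 (ContinuousLinearMap.coe_injective h),
      fun w hw => ?_⟩
    simpa using hf w (subset_convexHull ℝ S hw)
  · obtain ⟨w₀, hw₀⟩ := hS
    rw [interior_convexHull_nonempty_iff_affineSpan_eq_top] at hint
    obtain ⟨f, hf0, hf⟩ := exists_dual_ne_zero_eqOn_of_affineSpan_ne_top hw₀ hint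
    rcases le_total 0 (f w₀) with h | h
    · exact ⟨f, hf0, fun w hw => hf w hw ▸ h⟩
    · exact ⟨-f, neg_ne_zero.2 hf0, fun w hw => by simp [hf w hw, h]⟩

theorem exists_re_sum_conj_mul_eq {ι : Type*} [Fintype ι] (f : (ι → ℂ) →ₗ[ℝ] ℝ) :
    ∃ β : ι → ℂ, ∀ w, f w = (∑ i, conj (β i) * w i).re := by
  classical
  refine ⟨fun i => ⟨f (Pi.single i 1), f (Pi.single i Complex.I)⟩, fun w => ?_⟩
  have hsingle : ∀ i, (Pi.single i (w i) : ι → ℂ) =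
      (w i).re • (Pi.single i 1 : ι → ℂ) + (w i).im • (Pi.single i Complex.I : ι → ℂ) := by
    intro i
    rw [← Pi.single_smul, ← Pi.single_smul, ← Pi.single_add]
    congr 1
    apply Complex.ext <;> simp
  conv_lhs => rw [← Finset.univ_sum_single w]
  simp [hsingle, Complex.re_sum, mul_comm]

theorem Module.End.exists_hasEigenvalue_of_aeval_apply_eq_zero {K V : Type*} [Field K]
    [IsAlgClosed K] [AddCommGroup V] [Module K V] (f : Module.End K V) {p : K[X]} (hp : p ≠ 0)
    {v : V} (hv : v ≠ 0) (h : aeval f p v = 0) : ∃ μ, f.HasEigenvalue μ := by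
  rw [← C_leadingCoeff_mul_prod_multiset_X_sub_C (IsAlgClosed.card_roots_eq_natDegree (p := p)),
    map_mul, aeval_C, Module.End.mul_apply, Module.algebraMap_end_apply,
    smul_eq_zero_iff_right (leadingCoeff_ne_zero.2 hp)] at h
  generalize p.roots = s at h
  induction s using Multiset.induction_on generalizing v with
  | empty => simp [hv] at h
  | cons μ s ih =>
    rw [Multiset.map_cons, Multiset.prod_cons, map_mul, Module.End.mul_apply] at h
    by_cases hw : aeval f (s.map (X - C ·)).prod v = 0
    · exact ih hv hw
    · refine ⟨μ, Module.End.hasEigenvalue_of_hasEigenvector ⟨?_, hw⟩⟩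
      simpa [Module.End.mem_eigenspace_iff, sub_eq_zero] using h

theorem Polynomial.natDegree_X_mul_ofFn_le {R : Type*} [Semiring R] [DecidableEq R] (n : ℕ)
    (β : Fin n → R) : (X * ofFn n β).natDegree ≤ n := by
  rw [ofFn_eq_sum_monomial, Finset.mul_sum]
  refine natDegree_sum_le_of_forall_le _ _ fun k _ => ?_
  rw [X_mul_monomial]
  exact (natDegree_monomial_le _).trans k.isLt

section Accretive

variable {𝕜 E : Type*} [RCLike 𝕜] [NormedAddCommGroup E] [InnerProductSpace 𝕜 E]

local notation "⟪" x ", " y "⟫" => inner 𝕜 x y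

theorem re_inner_map_self_nonneg_of_norm_eq_one {A : Module.End 𝕜 E}
    (h : ∀ y : E, ‖y‖ = 1 → 0 ≤ re ⟪A y, y⟫) (y : E) : 0 ≤ re ⟪A y, y⟫ := by
  rcases eq_or_ne y 0 with rfl | hy
  · simp
  have hc : 0 < ‖y‖⁻¹ := inv_pos.2 (norm_pos_iff.2 hy)
  have hu : ‖((‖y‖⁻¹ : ℝ) : 𝕜) • y‖ = 1 := by
    rw [norm_smul, norm_ofReal, abs_of_pos hc, inv_mul_cancel₀ (norm_ne_zero_iff.2 hy)]
  have := h _ hu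
  rw [map_smul, inner_smul_left, inner_smul_right, ← mul_assoc, conj_ofReal, ← ofReal_mul,
    re_ofReal_mul] at this
  exact nonneg_of_mul_nonneg_right this (by positivity)

theorem re_inner_map_add_re_inner_map_eq_zero {A : Module.End 𝕜 E}
    (hA : ∀ y, 0 ≤ re ⟪A y, y⟫) {x : E} (hx : re ⟪A x, x⟫ = 0) (v : E) :
    re ⟪A x, v⟫ + re ⟪A v, x⟫ = 0 := by
  have hquad : ∀ t : ℝ, 0 ≤ re ⟪A v, v⟫ * (t * t) + (re ⟪A x, v⟫ + re ⟪A v, x⟫) * t + 0 := by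
    intro t
    have := hA (x + (t : 𝕜) • v)
    simp only [map_add, map_smul, inner_add_left, inner_add_right, inner_smul_left,
      inner_smul_right, conj_ofReal, re_ofReal_mul, hx] at this
    linarith
  have := discrim_le_zero hquad
  rw [discrim] at this
  nlinarith [sq_nonneg (re ⟪A x, v⟫ + re ⟪A v, x⟫)]

theorem inner_map_eq_neg_inner_map {A : Module.End 𝕜 E} (hA : ∀ y, 0 ≤ re ⟪A y, y⟫) {x : E}
    (hx : re ⟪A x, x⟫ = 0) (v : E) : ⟪A x, v⟫ = -⟪x, A v⟫ := by
  have hre := re_inner_map_add_re_inner_map_eq_zero hA hx v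
  have him := re_inner_map_add_re_inner_map_eq_zero hA hx ((I : 𝕜) • v)
  rw [map_smul, inner_smul_right, inner_smul_left, conj_I, neg_mul, map_neg, I_mul_re,
    I_mul_re] at him
  rw [← inner_conj_symm x]
  apply RCLike.ext <;> simp only [map_neg, conj_re, conj_im] <;> linarith

theorem map_eq_zero_of_re_inner_nonneg {A : Module.End 𝕜 E} (hA : ∀ y, 0 ≤ re ⟪A y, y⟫)
    {x : E} (hx : re ⟪A x, x⟫ = 0) (hx' : ⟪A (A x), x⟫ = 0) : A x = 0 := by
  rw [← inner_self_eq_zero (𝕜 := 𝕜), inner_map_eq_neg_inner_map hA hx, ← inner_conj_symm, hx',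
    map_zero, neg_zero]

theorem inner_aeval_apply_self_eq_zero (T : Module.End 𝕜 E) {x : E} {N : ℕ}
    (hx : ∀ k, 1 ≤ k → k ≤ N → ⟪(T ^ k) x, x⟫ = 0) {q : 𝕜[X]} (hq0 : q.coeff 0 = 0)
    (hqN : q.natDegree ≤ N) : ⟪aeval T q x, x⟫ = 0 := by
  rw [aeval_eq_sum_range, LinearMap.sum_apply, sum_inner]
  refine Finset.sum_eq_zero fun k hk => ?_
  rw [LinearMap.smul_apply, inner_smul_left]
  rcases Nat.eq_zero_or_pos k with rfl | hk0
  · rw [hq0, map_zero, zero_mul]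
  · rw [hx k hk0 ((Nat.lt_succ_iff.1 (Finset.mem_range.1 hk)).trans hqN), mul_zero]

theorem aeval_apply_eq_zero_of_inner_pow_apply_self_eq_zero (T : Module.End 𝕜 E) {p : 𝕜[X]}
    {n : ℕ} (hp0 : p.coeff 0 = 0) (hpn : p.natDegree ≤ n)
    (hA : ∀ y, 0 ≤ re ⟪aeval T p y, y⟫) {x : E}
    (hx : ∀ k, 1 ≤ k → k ≤ 2 * n → ⟪(T ^ k) x, x⟫ = 0) : aeval T p x = 0 := by
  refine map_eq_zero_of_re_inner_nonneg hA ?_ ?_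
  · rw [inner_aeval_apply_self_eq_zero T hx hp0 (by omega), zero_re]
  · rw [← Module.End.mul_apply, ← map_mul]
    refine inner_aeval_apply_self_eq_zero T hx (by simp [mul_coeff_zero, hp0]) ?_
    exact natDegree_mul_le.trans (by omega)

theorem inner_aeval_X_mul_ofFn_apply_self [DecidableEq 𝕜] (T : Module.End 𝕜 E) {n : ℕ}
    (β : Fin n → 𝕜) (y : E) :
    ⟪aeval T (X * ofFn n β) y, y⟫ = ∑ k, conj (β k) * ⟪(T ^ ((k : ℕ) + 1)) y, y⟫ := by
  simp [ofFn_eq_sum_monomial, Finset.mul_sum, X_mul_monomial, aeval_monomial, sum_inner,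
    inner_smul_left, Module.algebraMap_end_apply]

end Accretive

/-- If `(0,...,0)` is not in the interior of the convex hull of the joint
numerical range `W(T, T², ..., Tⁿ)` and there is a unit vector `x` with `⟨Tᵏx, x⟩ = 0`
for `k = 1, ..., 2n`, then `T` has an eigenvalue. -/
theorem stmt0 {H : Type*} [NormedAddCommGroup H] [InnerProductSpace ℂ H]
    (T : H →L[ℂ] H) (n : ℕ)
    (h1 : (0 : Fin n → ℂ) ∉ interior (convexHull ℝ
      {w : Fin n → ℂ | ∃ x : H, ‖x‖ = 1 ∧
        ∀ k : Fin n, w k = (inner ℂ ((T ^ ((k : ℕ) + 1)) x) x : ℂ)}))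
    (h2 : ∃ x : H, ‖x‖ = 1 ∧ ∀ k : ℕ, 1 ≤ k → k ≤ 2 * n →
      (inner ℂ ((T ^ k) x) x : ℂ) = 0) :
    ∃ (μ : ℂ) (v : H), v ≠ 0 ∧ T v = μ • v := by
  obtain ⟨x, hx1, hx⟩ := h2
  obtain ⟨f, hf0, hfW⟩ := exists_dual_ne_zero_nonneg_of_zero_notMem_interior_convexHull
    (by exact ⟨_, x, hx1, fun _ => rfl⟩) h1
  obtain ⟨β, hβ⟩ := exists_re_sum_conj_mul_eq f
  have hβ0 : β ≠ 0 := by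
    rintro rfl
    exact hf0 (LinearMap.ext fun w => by simp [hβ])
  set p : ℂ[X] := X * ofFn n β
  have hp0 : p ≠ 0 := mul_ne_zero X_ne_zero (by simpa using (injective_ofFn n).ne hβ0)
  have hpow (k : ℕ) (y : H) : ((T : Module.End ℂ H) ^ k) y = (T ^ k) y := by
    rw [← ContinuousLinearMap.toLinearMap_pow, ContinuousLinearMap.coe_coe]
  have hA (y : H) : 0 ≤ re (inner ℂ (aeval (T : Module.End ℂ H) p y) y) :=
    re_inner_map_self_nonneg_of_norm_eq_one (fun y hy => by
      simpa only [p, inner_aeval_X_mul_ofFn_apply_self, hpow, re_to_complex, ← hβ] using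
        hfW _ ⟨y, hy, fun _ => rfl⟩) y
  have hpx : aeval (T : Module.End ℂ H) p x = 0 :=
    aeval_apply_eq_zero_of_inner_pow_apply_self_eq_zero _ (coeff_X_mul_zero _)
      (natDegree_X_mul_ofFn_le n β) hA fun k hk hkn => by rw [hpow]; exact hx k hk hkn
  have hx0 : x ≠ 0 := by
    rintro rfl
    simp at hx1
  obtain ⟨μ, hμ⟩ := Module.End.exists_hasEigenvalue_of_aeval_apply_eq_zero _ hp0 hx0 hpx
  obtain ⟨v, hv⟩ := hμ.exists_hasEigenvector
  exact ⟨μ, v, hv.2, hv.apply_eq_smul⟩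
end

section
/- Let H be a complex Hilbert space, T : H →L[ℂ] H. Suppose there exist complex numbers c₁,...,cₙ such that Re ⟨∑ⱼ cⱼTʲ u, u⟩ ≥ 0 for all u ∈ H, and suppose x is a unit vector with ⟨Tᵏx, x⟩ = 0 for k = 1,...,2n. Then Sx = 0, where S = ∑ⱼ cⱼTʲ. -/
/-!
Write `y = S x`. Since `S` is a polynomial in `T` without constant term and of degree at most
`n`, both `⟪y, x⟫` and `⟪S y, x⟫` are combinations of the moments `⟪Tᵏ x, x⟫` with
`1 ≤ k ≤ 2n`, hence vanish. Testing accretivity of `S` on `x + t y` for real `t` then gives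
`t ‖y‖² + t² Re ⟪S y, y⟫ ≥ 0` for all `t`, which forces `‖y‖² = 0`.
-/

open RCLike

open scoped InnerProductSpace

theorem commute_pow_sum_smul_pow_succ {R A : Type*} [CommSemiring R] [Semiring A] [Algebra R A]
    (a : A) {n : ℕ} (c : Fin n → R) (m : ℕ) :
    Commute (a ^ m) (∑ j : Fin n, c j • a ^ ((j : ℕ) + 1)) :=
  Commute.sum_right _ _ _ fun j _ => (Commute.pow_pow_self a m _).smul_right (c j)

section

variable {𝕜 E : Type*} [RCLike 𝕜] [NormedAddCommGroup E] [InnerProductSpace 𝕜 E]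

theorem LinearMap.apply_eq_zero_of_forall_re_inner_nonneg {S : E →ₗ[𝕜] E}
    (hpos : ∀ u, 0 ≤ re ⟪S u, u⟫_𝕜) {x : E} (h₁ : re ⟪S x, x⟫_𝕜 = 0)
    (h₂ : re ⟪S (S x), x⟫_𝕜 = 0) : S x = 0 := by
  have hquad : ∀ t : ℝ, 0 ≤ re ⟪S (S x), S x⟫_𝕜 * (t * t) + ‖S x‖ ^ 2 * t + 0 := by
    intro t
    have h := hpos (x + (t : 𝕜) • S x)
    simp only [map_add, map_smul, inner_add_left, inner_add_right, inner_smul_real_left,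
      inner_smul_real_right, smul_re, h₁, h₂, inner_self_eq_norm_sq] at h
    linarith
  have hdisc := discrim_le_zero hquad
  rw [discrim, mul_zero, sub_zero] at hdisc
  simpa using le_antisymm hdisc (by positivity)

variable (T : E →L[𝕜] E) {n : ℕ} (c : Fin n → 𝕜)

theorem inner_sum_smul_pow_succ_apply_eq_zero {x y : E}
    (h : ∀ j : Fin n, ⟪(T ^ ((j : ℕ) + 1)) y, x⟫_𝕜 = 0) :
    ⟪(∑ j : Fin n, c j • T ^ ((j : ℕ) + 1)) y, x⟫_𝕜 = 0 := by
  rw [sum_apply, sum_inner]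
  exact Finset.sum_eq_zero fun j _ => by rw [smul_apply, inner_smul_left, h, mul_zero]

end

theorem stmt1_general {H : Type*} [NormedAddCommGroup H] [InnerProductSpace ℂ H]
    (T : H →L[ℂ] H) (n : ℕ) (c : Fin n → ℂ) (S : H →L[ℂ] H)
    (hS : S = ∑ j : Fin n, c j • T ^ ((j : ℕ) + 1))
    (hpos : ∀ u : H, 0 ≤ (inner ℂ (S u) u : ℂ).re)
    (x : H)
    (horth : ∀ k : ℕ, 1 ≤ k → k ≤ 2 * n → (inner ℂ ((T ^ k) x) x : ℂ) = 0) :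
    S x = 0 := by
  have hmoment : ∀ m ≤ n, ⟪(T ^ m) (S x), x⟫_ℂ = 0 := by
    intro m hm
    rw [hS, ← mul_apply_eq_comp, (commute_pow_sum_smul_pow_succ T c m).eq,
      mul_apply_eq_comp]
    refine inner_sum_smul_pow_succ_apply_eq_zero T c fun j => ?_
    rw [← mul_apply_eq_comp, ← pow_add]
    exact horth _ (by omega) (by omega)
  have h₁ : ⟪S x, x⟫_ℂ = 0 := by simpa using hmoment 0 n.zero_le
  have h₂ : ⟪S (S x), x⟫_ℂ = 0 := by
    have h := inner_sum_smul_pow_succ_apply_eq_zero T c fun j => hmoment _ j.2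
    rwa [← hS] at h
  exact LinearMap.apply_eq_zero_of_forall_re_inner_nonneg (S := S.toLinearMap) hpos
    (by simp [h₁]) (by simp [h₂])

/-- If `Re ⟨S u, u⟩ ≥ 0` for all `u`, where `S = ∑ⱼ cⱼ Tʲ`, and `x` is a
unit vector with `⟨Tᵏ x, x⟩ = 0` for `k = 1, ..., 2n`, then `S x = 0`. -/
theorem stmt1 {H : Type*} [NormedAddCommGroup H] [InnerProductSpace ℂ H]
    (T : H →L[ℂ] H) (n : ℕ) (c : Fin n → ℂ) (S : H →L[ℂ] H)
    (hS : S = ∑ j : Fin n, c j • T ^ ((j : ℕ) + 1))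
    (hpos : ∀ u : H, 0 ≤ (inner ℂ (S u) u : ℂ).re)
    (x : H) (hx : ‖x‖ = 1)
    (horth : ∀ k : ℕ, 1 ≤ k → k ≤ 2 * n → (inner ℂ ((T ^ k) x) x : ℂ) = 0) :
    S x = 0 :=
  stmt1_general T n c S hS hpos x horth
end

section
/- Let H be a complex Hilbert space and let u₁, ..., uₙ ∈ H be linearly independent vectors. Let α₁, ..., αₙ be nonnegative real numbers with ∑ₖ αₖ = 1. Then there exist complex numbers w₁, ..., wₙ such that the vector u = ∑ⱼ wⱼuⱼ satisfies ‖u‖ ≤ 1 and ⟨wⱼuⱼ, u⟩ = αⱼ for every j = 1, ..., n. (Zenger's Lemma) -/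
/-! The function `φ z = ∏ⱼ |zⱼ| ^ (2αⱼ)` on `ℂⁿ` is continuous and homogeneous of degree 2, so
on the compact set `{z | ‖∑ⱼ zⱼ uⱼ‖ ≤ 1}` it attains a positive maximum `M` at some `c`, and then
`φ z ≤ M ‖∑ⱼ zⱼ uⱼ‖²` everywhere, with `‖∑ⱼ cⱼ uⱼ‖ = 1`. Since `φ` is multiplicative, testing this
at `cⱼ (1 + t γⱼ)` gives `φ (1 + t γ) ≤ ‖∑ⱼ cⱼ uⱼ + t ∑ⱼ γⱼ cⱼ uⱼ‖²` with equality at `t = 0`;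
comparing derivatives there gives the real part of `⟪∑ⱼ cⱼ uⱼ, ∑ⱼ γⱼ cⱼ uⱼ⟫ = ∑ⱼ αⱼ γⱼ`, and
`γ ↦ -iγ` the imaginary part. Taking `γ = eⱼ` shows that `w = c` works. -/

open Finset Function Filter Topology

theorem HasDerivAt.eq_of_eventually_le_of_eq {f g : ℝ → ℝ} {f' g' a : ℝ}
    (hf : HasDerivAt f f' a) (hg : HasDerivAt g g' a) (hle : ∀ᶠ t in 𝓝 a, f t ≤ g t)
    (ha : f a = g a) : f' = g' := by
  have hmin : IsLocalMin (fun t => g t - f t) a :=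
    hle.mono fun t ht => by simp only [ha, sub_self]; linarith
  linarith [hmin.hasDerivAt_eq_zero (hg.sub hf)]

theorem hasDerivAt_norm_add_smul_sq {H : Type*} [NormedAddCommGroup H] [InnerProductSpace ℂ H]
    (x v : H) : HasDerivAt (fun t : ℝ => ‖x + t • v‖ ^ 2) (2 * (inner ℂ x v).re) 0 := by
  let := InnerProductSpace.rclikeToReal ℂ H
  have h := (((hasDerivAt_id (0 : ℝ)).smul_const v).const_add x).norm_sq
  rw [real_inner_eq_re_inner ℂ] at h
  simpa using h

theorem exists_forall_le_mul_norm_sq_of_homogeneous {E F : Type*} [NormedAddCommGroup E]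
    [NormedSpace ℝ E] [FiniteDimensional ℝ E] [NormedAddCommGroup F] [NormedSpace ℝ F]
    {L : E →ₗ[ℝ] F} (hL : Injective L) {f : E → ℝ} (hf : Continuous f)
    (hhom : ∀ (t : ℝ) z, f (t • z) = t ^ 2 * f z) :
    ∃ c, ‖L c‖ ≤ 1 ∧ ∀ z, f z ≤ f c * ‖L z‖ ^ 2 := by
  obtain ⟨K, -, hK⟩ := L.exists_antilipschitzWith (LinearMap.ker_eq_bot.2 hL)
  have hcompact : IsCompact {z | ‖L z‖ ≤ 1} := by
    refine Metric.isCompact_of_isClosed_isBounded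
      (isClosed_le L.continuous_of_finiteDimensional.norm continuous_const) ?_
    simpa [Set.preimage, Metric.closedBall] using
      hK.isBounded_preimage (Metric.isBounded_closedBall (x := 0) (r := 1))
  obtain ⟨c, hc, hmax⟩ := hcompact.exists_isMaxOn ⟨0, by simp⟩ hf.continuousOn
  refine ⟨c, hc, fun z => ?_⟩
  rcases eq_or_ne (L z) 0 with hz | hz
  · have hf0 : f 0 = 0 := by
      have h2 := hhom 2 0
      rw [smul_zero] at h2
      linarith
    simp [hL (hz.trans L.map_zero.symm), hf0]
  · have hpos : 0 < ‖L z‖ := norm_pos_iff.2 hz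
    have hscaled : f (‖L z‖⁻¹ • z) ≤ f c := hmax (by simp [norm_smul, hpos.ne'])
    rw [hhom] at hscaled
    calc f z = ‖L z‖ ^ 2 * ((‖L z‖⁻¹) ^ 2 * f z) := by field_simp
      _ ≤ ‖L z‖ ^ 2 * f c := by gcongr
      _ = f c * ‖L z‖ ^ 2 := mul_comm _ _

section Zenger

variable {ι : Type*} [Fintype ι] (α : ι → ℝ)

-- `∏ⱼ |zⱼ|^(2αⱼ)`, written through `‖zⱼ‖ ^ 2` so that it can be differentiated with `norm_sq`.
noncomputable def zengerProduct (z : ι → ℂ) : ℝ := ∏ j, (‖z j‖ ^ 2) ^ α j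

@[simp]
theorem zengerProduct_one : zengerProduct α 1 = 1 := by
  simp [zengerProduct]

theorem zengerProduct_mul (z w : ι → ℂ) :
    zengerProduct α (z * w) = zengerProduct α z * zengerProduct α w := by
  simp only [zengerProduct, Pi.mul_apply, norm_mul, mul_pow,
    Real.mul_rpow (sq_nonneg _) (sq_nonneg _), prod_mul_distrib]

variable {α}

theorem zengerProduct_smul (hα : ∀ j, 0 ≤ α j) (hsum : ∑ j, α j = 1) (t : ℝ) (z : ι → ℂ) :
    zengerProduct α (t • z) = t ^ 2 * zengerProduct α z := by
  simp only [zengerProduct, Pi.smul_apply, norm_smul, mul_pow, Real.norm_eq_abs, sq_abs,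
    Real.mul_rpow (sq_nonneg _) (sq_nonneg _), prod_mul_distrib]
  rw [← Real.rpow_sum_of_nonneg (sq_nonneg t) (fun j _ => hα j), hsum, Real.rpow_one]

theorem continuous_zengerProduct (hα : ∀ j, 0 ≤ α j) : Continuous (zengerProduct α) :=
  continuous_finsetProd _ fun j _ =>
    ((continuous_apply j).norm.pow 2).rpow_const fun _ => Or.inr (hα j)

theorem hasDerivAt_zengerProduct_one_add_smul (γ : ι → ℂ) :
    HasDerivAt (fun t : ℝ => zengerProduct α (1 + t • γ)) (2 * ∑ j, α j * (γ j).re) 0 := by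
  classical
  have hfactor : ∀ j ∈ univ, HasDerivAt (fun t : ℝ => (‖1 + t • γ j‖ ^ 2) ^ α j)
      (2 * (γ j).re * α j) 0 := by
    intro j _
    have h := (((hasDerivAt_id (0 : ℝ)).smul_const (γ j)).const_add 1).norm_sq.rpow_const
      (p := α j) (Or.inl (by simp))
    simpa using h
  refine (HasDerivAt.fun_finsetProd hfactor).congr_deriv ?_
  simp [mul_sum, mul_comm, mul_left_comm, mul_assoc]

variable {H : Type*} [NormedAddCommGroup H] [InnerProductSpace ℂ H]

theorem exists_zengerProduct_maximizer {L : (ι → ℂ) →ₗ[ℂ] H} (hL : Injective L)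
    (hα : ∀ j, 0 ≤ α j) (hsum : ∑ j, α j = 1) :
    ∃ c, ‖L c‖ = 1 ∧ 0 < zengerProduct α c ∧
      ∀ z, zengerProduct α z ≤ zengerProduct α c * ‖L z‖ ^ 2 := by
  obtain ⟨c, hc, hmax⟩ := exists_forall_le_mul_norm_sq_of_homogeneous
    (L := L.restrictScalars ℝ) hL (continuous_zengerProduct hα) (zengerProduct_smul hα hsum)
  have hpos : 0 < zengerProduct α c := by
    by_contra! h
    have h1 := hmax 1
    rw [zengerProduct_one] at h1
    nlinarith [sq_nonneg ‖L 1‖]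
  refine ⟨c, le_antisymm hc ?_, hpos, hmax⟩
  have h1 : zengerProduct α c * 1 ≤ zengerProduct α c * ‖L c‖ ^ 2 := by
    simpa using hmax c
  nlinarith [le_of_mul_le_mul_left h1 hpos, norm_nonneg (L c)]

theorem re_inner_map_mul_eq_of_forall_le (L : (ι → ℂ) →ₗ[ℂ] H) {c : ι → ℂ} (hc : ‖L c‖ = 1)
    (hpos : 0 < zengerProduct α c)
    (hmax : ∀ z, zengerProduct α z ≤ zengerProduct α c * ‖L z‖ ^ 2) (γ : ι → ℂ) :
    (inner ℂ (L c) (L (c * γ))).re = ∑ j, α j * (γ j).re := by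
  have hle : ∀ t : ℝ, zengerProduct α (1 + t • γ) ≤ ‖L c + t • L (c * γ)‖ ^ 2 := by
    intro t
    have h := hmax (c * (1 + t • γ))
    rw [zengerProduct_mul, mul_add, mul_one, mul_smul_comm, map_add, L.map_smul_of_tower] at h
    exact le_of_mul_le_mul_left h hpos
  have h := (hasDerivAt_zengerProduct_one_add_smul γ).eq_of_eventually_le_of_eq
    (hasDerivAt_norm_add_smul_sq (L c) (L (c * γ))) (Eventually.of_forall hle) (by simp [hc])
  linarith

theorem inner_map_mul_eq_of_forall_le (L : (ι → ℂ) →ₗ[ℂ] H) {c : ι → ℂ} (hc : ‖L c‖ = 1)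
    (hpos : 0 < zengerProduct α c)
    (hmax : ∀ z, zengerProduct α z ≤ zengerProduct α c * ‖L z‖ ^ 2) (γ : ι → ℂ) :
    inner ℂ (L c) (L (c * γ)) = ∑ j, (α j : ℂ) * γ j := by
  have hre := re_inner_map_mul_eq_of_forall_le L hc hpos hmax
  apply Complex.ext
  · simpa [Complex.re_sum] using hre γ
  · have h := hre (-Complex.I • γ)
    rw [mul_smul_comm, map_smul, inner_smul_right] at h
    simpa [Complex.im_sum] using h

end Zenger

/-- Zenger's Lemma: For linearly independent `u₁,...,uₙ` in a complex
Hilbert space and nonnegative `α₁,...,αₙ` summing to `1`, there exist complex numbers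
`w₁,...,wₙ` so that `u = ∑ⱼ wⱼ uⱼ` satisfies `‖u‖ ≤ 1` and `⟨wⱼ uⱼ, u⟩ = αⱼ` for all `j`. -/
theorem stmt3 {H : Type*} [NormedAddCommGroup H] [InnerProductSpace ℂ H]
    (n : ℕ) (u : Fin n → H) (hu : LinearIndependent ℂ u)
    (α : Fin n → ℝ) (hα : ∀ j, 0 ≤ α j) (hsum : ∑ j, α j = 1) :
    ∃ w : Fin n → ℂ, ‖∑ j, w j • u j‖ ≤ 1 ∧
      ∀ j, (inner ℂ (w j • u j) (∑ i, w i • u i) : ℂ) = (α j : ℂ) := by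
  obtain ⟨c, hc, hpos, hmax⟩ :=
    exists_zengerProduct_maximizer hu.fintypeLinearCombination_injective hα hsum
  refine ⟨c, (Fintype.linearCombination_apply ℂ u c ▸ hc).le, fun k => ?_⟩
  have h := inner_map_mul_eq_of_forall_le _ hc hpos hmax (Pi.single k 1)
  rw [← Pi.single_mul_right, mul_one, Fintype.linearCombination_apply_single] at h
  rw [← inner_conj_symm, ← Fintype.linearCombination_apply ℂ u c, h]
  simp [Pi.single_apply]
end

section
/- Let H be an infinite-dimensional complex Hilbert space and 𝒯 = (T₁,...,Tₙ) a tuple of bounded operators on H. If λ = (λ₁,...,λₙ) ∈ ℂⁿ is such that for every closed subspace M ⊆ H of finite codimension there exists a unit vector x ∈ M with ⟨Tⱼx, x⟩ = λⱼ for all j, then there exists an infinite-dimensional closed subspace L ⊆ H such that P_L Tⱼ P_L = λⱼ P_L for all j = 1,...,n, where P_L is the orthogonal projection onto L. -/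
/-!
Choose unit vectors `x₀, x₁, …` one at a time: applying the hypothesis to the orthogonal
complement of the finitely many vectors `xᵢ, Tⱼ xᵢ, Tⱼ* xᵢ` (`i < k`) yields `x_k` with
`⟨Tⱼ x_k, x_k⟩ = λⱼ` which is orthogonal to all of them. The sequence is then orthonormal and
`⟨Tⱼ xᵢ, x_k⟩ = λⱼ δᵢₖ`, so `⟨Tⱼ x, y⟩ = λⱼ ⟨x, y⟩` holds on the span of the `xᵢ` and, by
continuity, on its closure `L`, which is infinite-dimensional.
-/

open scoped InnerProductSpace

section

variable {H : Type*} [NormedAddCommGroup H] [InnerProductSpace ℂ H]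

theorem exists_orthogonal_of_forall_finiteDimensional_orthogonal {P : H → Prop}
    (h : ∀ M : Submodule ℂ H, IsClosed (M : Set H) → FiniteDimensional ℂ ↥Mᗮ → ∃ x ∈ M, P x)
    {s : Set H} (hs : s.Finite) : ∃ x, P x ∧ ∀ u ∈ s, ⟪u, x⟫_ℂ = 0 := by
  have : FiniteDimensional ℂ (Submodule.span ℂ s) := FiniteDimensional.span_of_finite ℂ hs
  obtain ⟨x, hx, hPx⟩ := h (Submodule.span ℂ s)ᗮ (Submodule.isClosed_orthogonal _)
    (by rwa [Submodule.orthogonal_orthogonal])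
  exact ⟨x, hPx, fun u hu => (Submodule.mem_orthogonal _ x).mp hx u (Submodule.subset_span hu)⟩

theorem exists_seq_orthogonal_of_forall_finiteDimensional_orthogonal [CompleteSpace H]
    {ι : Type*} [Finite ι] (T : ι → H →L[ℂ] H) {P : H → Prop}
    (h : ∀ M : Submodule ℂ H, IsClosed (M : Set H) → FiniteDimensional ℂ ↥Mᗮ → ∃ x ∈ M, P x) :
    ∃ x : ℕ → H, (∀ k, P (x k)) ∧ ∀ m k, m < k →
      ⟪x m, x k⟫_ℂ = 0 ∧ ∀ j, ⟪T j (x m), x k⟫_ℂ = 0 ∧ ⟪T j (x k), x m⟫_ℂ = 0 := by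
  refine exists_seq_of_forall_finset_exists P (fun y x => ⟪y, x⟫_ℂ = 0 ∧
    ∀ j, ⟪T j y, x⟫_ℂ = 0 ∧ ⟪T j x, y⟫_ℂ = 0) fun s _ => ?_
  let A : Set H := ⋃ y ∈ s, insert y (Set.range (T · y) ∪ Set.range (fun j => (T j).adjoint y))
  have hA : A.Finite := s.finite_toSet.biUnion fun y _ =>
    ((Set.finite_range _).union (Set.finite_range _)).insert y
  obtain ⟨x, hPx, hx⟩ := exists_orthogonal_of_forall_finiteDimensional_orthogonal h hA
  refine ⟨x, hPx, fun y hy => ⟨hx y ?_, fun j => ⟨hx _ ?_, ?_⟩⟩⟩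
  · exact Set.mem_biUnion hy (Set.mem_insert y _)
  · exact Set.mem_biUnion hy (Or.inr (Or.inl ⟨j, rfl⟩))
  · rw [← ContinuousLinearMap.adjoint_inner_right, ← inner_conj_symm,
      hx _ (Set.mem_biUnion hy (Or.inr (Or.inr ⟨j, rfl⟩))), map_zero]

theorem inner_map_eq_mul_inner_of_mem_closure_span {ι : Type*} (A : H →L[ℂ] H) (c : ℂ)
    {v : ι → H} (hv : ∀ i i', ⟪A (v i), v i'⟫_ℂ = c * ⟪v i, v i'⟫_ℂ) :
    ∀ x ∈ (Submodule.span ℂ (Set.range v)).topologicalClosure,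
    ∀ y ∈ (Submodule.span ℂ (Set.range v)).topologicalClosure,
      ⟪A x, y⟫_ℂ = c * ⟪x, y⟫_ℂ := by
  set V := Submodule.span ℂ (Set.range v)
  set B := A - (starRingEnd ℂ c) • ContinuousLinearMap.id ℂ H
  have hB : ∀ x y, ⟪B x, y⟫_ℂ = ⟪A x, y⟫_ℂ - c * ⟪x, y⟫_ℂ := fun x y => by
    simp [B, mul_comm]
  have hVB : V.map (B : H →ₗ[ℂ] H) ⟂ V := by
    rw [Submodule.map_span, Submodule.isOrtho_span]
    rintro _ ⟨_, ⟨i, rfl⟩, rfl⟩ _ ⟨i', rfl⟩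
    rw [ContinuousLinearMap.coe_coe, hB, hv, sub_self]
  -- `B V ⟂ V` is a closed condition on `V`, so it passes to the closure.
  have hK : V.topologicalClosure ≤ (V.topologicalClosureᗮ).comap (B : H →ₗ[ℂ] H) := by
    refine V.topologicalClosure_minimal ?_
      (Submodule.isClosed_orthogonal _ |>.preimage B.continuous)
    rw [Submodule.orthogonal_closure, ← Submodule.map_le_iff_le_comap]
    exact hVB.le
  intro x hx y hy
  rw [← sub_eq_zero, ← hB]
  exact Submodule.inner_left_of_mem_orthogonal hy (hK hx)

theorem not_finiteDimensional_of_orthonormal_mem {ι : Type*} [Infinite ι] {v : ι → H}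
    (hv : Orthonormal ℂ v) {K : Submodule ℂ H} (hvK : ∀ i, v i ∈ K) :
    ¬ FiniteDimensional ℂ K := by
  intro _
  have := (hv.codRestrict K hvK).linearIndependent.finite
  exact not_finite ι

end

theorem stmt4_general {H : Type*} [NormedAddCommGroup H] [InnerProductSpace ℂ H] [CompleteSpace H]
    (n : ℕ) (T : Fin n → H →L[ℂ] H) (l : Fin n → ℂ)
    (h : ∀ M : Submodule ℂ H, IsClosed (M : Set H) → FiniteDimensional ℂ ↥Mᗮ →
      ∃ x ∈ M, ‖x‖ = 1 ∧ ∀ j, (inner ℂ ((T j) x) x : ℂ) = l j) :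
    ∃ L : Submodule ℂ H, IsClosed (L : Set H) ∧ ¬ FiniteDimensional ℂ ↥L ∧
      ∀ j, ∀ x ∈ L, ∀ y ∈ L, (inner ℂ ((T j) x) y : ℂ) = l j * inner ℂ x y := by
  obtain ⟨x, hP, hx⟩ := exists_seq_orthogonal_of_forall_finiteDimensional_orthogonal T h
  have horth : ∀ {i k}, i ≠ k → ⟪x i, x k⟫_ℂ = 0 ∧ ∀ j, ⟪T j (x i), x k⟫_ℂ = 0 := by
    intro i k hik
    rcases hik.lt_or_gt with hik | hki
    · exact ⟨(hx i k hik).1, fun j => ((hx i k hik).2 j).1⟩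
    · exact ⟨inner_eq_zero_symm.mp (hx k i hki).1, fun j => ((hx k i hki).2 j).2⟩
  have hon : Orthonormal ℂ x := ⟨fun k => (hP k).1, fun i k hik => (horth hik).1⟩
  have hkey : ∀ j i k, ⟪T j (x i), x k⟫_ℂ = l j * ⟪x i, x k⟫_ℂ := by
    intro j i k
    obtain rfl | hik := eq_or_ne i k
    · rw [(hP i).2 j, inner_self_eq_norm_sq_to_K, (hP i).1]; simp
    · rw [(horth hik).1, (horth hik).2 j, mul_zero]
  exact ⟨(Submodule.span ℂ (Set.range x)).topologicalClosure,
    Submodule.isClosed_topologicalClosure _,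
    not_finiteDimensional_of_orthonormal_mem hon fun k =>
      Submodule.le_topologicalClosure _ (Submodule.subset_span ⟨k, rfl⟩),
    fun j => inner_map_eq_mul_inner_of_mem_closure_span (T j) (l j) (hkey j)⟩

/-- If for every closed subspace `M` of finite codimension there is a unit
vector `x ∈ M` with `⟨Tⱼ x, x⟩ = λⱼ` for all `j`, then there is an infinite-dimensional
closed subspace `L` with `P_L Tⱼ P_L = λⱼ P_L` for all `j`.  The operator identity
`P_L Tⱼ P_L = λⱼ P_L` is expressed equivalently as
`⟨Tⱼ x, y⟩ = λⱼ ⟨x, y⟩` for all `x, y ∈ L`. -/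
theorem stmt4 {H : Type*} [NormedAddCommGroup H] [InnerProductSpace ℂ H] [CompleteSpace H]
    (hinf : ¬ FiniteDimensional ℂ H)
    (n : ℕ) (T : Fin n → H →L[ℂ] H) (l : Fin n → ℂ)
    (h : ∀ M : Submodule ℂ H, IsClosed (M : Set H) → FiniteDimensional ℂ ↥Mᗮ →
      ∃ x ∈ M, ‖x‖ = 1 ∧ ∀ j, (inner ℂ ((T j) x) x : ℂ) = l j) :
    ∃ L : Submodule ℂ H, IsClosed (L : Set H) ∧ ¬ FiniteDimensional ℂ ↥L ∧
      ∀ j, ∀ x ∈ L, ∀ y ∈ L, (inner ℂ ((T j) x) y : ℂ) = l j * inner ℂ x y :=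
  stmt4_general n T l h
end

section
/- Let H be an infinite-dimensional complex Hilbert space, 𝒯 = (T₁,...,Tₙ) a tuple of bounded operators, and suppose λ ∈ ℂⁿ belongs to W_k(𝒯) for every k ∈ ℕ, where W_k(𝒯) is the rank-k numerical range. Then for every closed subspace M ⊆ H of finite codimension there exists a unit vector x ∈ M with ⟨Tⱼx, x⟩ = λⱼ for all j = 1,...,n. -/
/-! A subspace `F` witnessing `λ ∈ W_{m+1}(𝒯)`, with `m` the codimension of `M`, meets `M`
nontrivially, and every unit vector `x ∈ F` has `⟨Tⱼ x, x⟩ = λⱼ ‖x‖² = λⱼ`. -/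

open Module

namespace Submodule

variable {𝕜 E : Type*} [RCLike 𝕜] [NormedAddCommGroup E] [InnerProductSpace 𝕜 E]

theorem exists_norm_eq_one_mem_of_ne_bot {S : Submodule 𝕜 E} (hS : S ≠ ⊥) :
    ∃ x ∈ S, ‖x‖ = 1 := by
  obtain ⟨x, hxS, hx0⟩ := (Submodule.ne_bot_iff S).mp hS
  exact ⟨(‖x‖⁻¹ : 𝕜) • x, S.smul_mem _ hxS, norm_smul_inv_norm hx0⟩

/-- The kernel of the projection onto `Mᗮ`, restricted to `F`, is `M ⊓ F`. -/
theorem inf_ne_bot_of_finrank_orthogonal_lt [CompleteSpace E] {M F : Submodule 𝕜 E}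
    (hM : IsClosed (M : Set E)) [FiniteDimensional 𝕜 Mᗮ] [FiniteDimensional 𝕜 F]
    (hlt : finrank 𝕜 Mᗮ < finrank 𝕜 F) : M ⊓ F ≠ ⊥ := by
  have : CompleteSpace M := hM.completeSpace_coe
  let f : F →ₗ[𝕜] Mᗮ := Mᗮ.orthogonalProjectionOnto.toLinearMap ∘ₗ F.subtype
  obtain ⟨x, hx, hx0⟩ :=
    (Submodule.ne_bot_iff _).mp (LinearMap.ker_ne_bot_of_finrank_lt (f := f) hlt)
  have hxM : (x : E) ∈ Mᗮᗮ := orthogonalProjectionOnto_eq_zero_iff.mp hx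
  rw [orthogonal_orthogonal] at hxM
  exact (Submodule.ne_bot_iff _).mpr ⟨x, ⟨hxM, x.2⟩, by simpa using hx0⟩

end Submodule

theorem stmt5_general {H : Type*} [NormedAddCommGroup H] [InnerProductSpace ℂ H] [CompleteSpace H]
    (n : ℕ) (T : Fin n → H →L[ℂ] H) (l : Fin n → ℂ)
    (h : ∀ k : ℕ, ∃ F : Submodule ℂ H, FiniteDimensional ℂ ↥F ∧
      Module.finrank ℂ ↥F = k ∧
      ∀ j, ∀ x ∈ F, ∀ y ∈ F, (inner ℂ ((T j) x) y : ℂ) = l j * inner ℂ x y) :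
    ∀ M : Submodule ℂ H, IsClosed (M : Set H) → FiniteDimensional ℂ ↥Mᗮ →
      ∃ x ∈ M, ‖x‖ = 1 ∧ ∀ j, (inner ℂ ((T j) x) x : ℂ) = l j := by
  intro M hM _
  obtain ⟨F, _, hFrank, hF⟩ := h (finrank ℂ Mᗮ + 1)
  obtain ⟨x, ⟨hxM, hxF⟩, hx1⟩ := Submodule.exists_norm_eq_one_mem_of_ne_bot
    (M.inf_ne_bot_of_finrank_orthogonal_lt (F := F) hM (by omega))
  refine ⟨x, hxM, hx1, fun j => ?_⟩
  rw [hF j x hxF x hxF, inner_self_eq_norm_sq_to_K, hx1]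
  simp

/-- If `λ ∈ W_k(𝒯)` for every `k ∈ ℕ` (the rank-`k` numerical range,
encoded via: there is a `k`-dimensional subspace `F` with `P_F Tⱼ P_F = λⱼ P_F`,
i.e. `⟨Tⱼ x, y⟩ = λⱼ ⟨x, y⟩` for all `x, y ∈ F`), then for every closed subspace `M`
of finite codimension there is a unit vector `x ∈ M` with `⟨Tⱼ x, x⟩ = λⱼ` for all `j`. -/
theorem stmt5 {H : Type*} [NormedAddCommGroup H] [InnerProductSpace ℂ H] [CompleteSpace H]
    (hinf : ¬ FiniteDimensional ℂ H)
    (n : ℕ) (T : Fin n → H →L[ℂ] H) (l : Fin n → ℂ)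
    (h : ∀ k : ℕ, ∃ F : Submodule ℂ H, FiniteDimensional ℂ ↥F ∧
      Module.finrank ℂ ↥F = k ∧
      ∀ j, ∀ x ∈ F, ∀ y ∈ F, (inner ℂ ((T j) x) y : ℂ) = l j * inner ℂ x y) :
    ∀ M : Submodule ℂ H, IsClosed (M : Set H) → FiniteDimensional ℂ ↥Mᗮ →
      ∃ x ∈ M, ‖x‖ = 1 ∧ ∀ j, (inner ℂ ((T j) x) x : ℂ) = l j :=
  stmt5_general n T l h
end

section
/- Let H be an infinite-dimensional separable complex Hilbert space and 𝒯 = (T₁,...,Tₙ) a tuple of bounded operators. Define W_∞(𝒯) as the set of λ ∈ ℂⁿ for which there is an infinite-dimensional closed subspace L with P_L Tⱼ P_L = λⱼ P_L for all j. Then W_∞(𝒯) is a convex subset of ℂⁿ. -/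
/-!
Let `λ, μ ∈ W_∞(𝒯)` be witnessed by `L₁, L₂`, and `a + b = 1` with `a, b ≥ 0`. Choose
inductively unit vectors `x_k ∈ L₁`, `y_k ∈ L₂` such that any two distinct chosen vectors `u, v`
satisfy `⟪u, v⟫ = ⟪Tⱼ u, v⟫ = ⟪Tⱼ v, u⟫ = 0`. Each step imposes only finitely many linear
conditions, so it can be carried out in the infinite-dimensional `L₁` and `L₂`. Then
`z_k = √a x_k + √b y_k` is orthonormal, all cross terms vanish, and
`⟪Tⱼ z_k, z_l⟫ = a ⟪Tⱼ x_k, x_l⟫ + b ⟪Tⱼ y_k, y_l⟫ = (a λⱼ + b μⱼ) δ_kl`. The compression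
identity passes to the closed span of the `z_k`, which therefore witnesses `a λ + b μ ∈ W_∞(𝒯)`.
-/

open scoped InnerProductSpace

section

variable {𝕜 E ι : Type*} [RCLike 𝕜] [NormedAddCommGroup E] [InnerProductSpace 𝕜 E]

lemma Submodule.exists_norm_eq_one_forall_eq_zero {κ : Type*} [Finite κ]
    (φ : κ → E →ₗ[𝕜] 𝕜) {L : Submodule 𝕜 E} (hL : ¬ FiniteDimensional 𝕜 L) :
    ∃ u ∈ L, ‖u‖ = 1 ∧ ∀ i, φ i u = 0 := by
  let f : L →ₗ[𝕜] κ → 𝕜 := LinearMap.pi fun i => φ i ∘ₗ L.subtype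
  have hker : LinearMap.ker f ≠ ⊥ := fun h =>
    hL (Module.Finite.of_injective f (LinearMap.ker_eq_bot.mp h))
  obtain ⟨u, hu, hu0⟩ := Submodule.exists_mem_ne_zero_of_ne_bot hker
  have hu0' : (u : E) ≠ 0 := by exact_mod_cast hu0
  refine ⟨(‖(u : E)‖⁻¹ : 𝕜) • (u : E), L.smul_mem _ u.2, norm_smul_inv_norm hu0', fun i => ?_⟩
  rw [map_smul, show φ i u = 0 from congrFun hu i, smul_zero]

lemma not_finiteDimensional_of_orthonormal {κ : Type*} [Infinite κ] {v : κ → E}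
    (hv : Orthonormal 𝕜 v) {K : Submodule 𝕜 E} (hK : ∀ k, v k ∈ K) :
    ¬ FiniteDimensional 𝕜 K := fun _ =>
  Module.Finite.not_linearIndependent_of_infinite (R := 𝕜) (fun k => (⟨v k, hK k⟩ : K))
    (LinearIndependent.of_comp K.subtype hv.linearIndependent)

lemma inner_map_smul_add_smul (A : E →L[𝕜] E) (α β : ℝ) {u v u' v' : E}
    (hu : ⟪A u, v'⟫_𝕜 = 0) (hv : ⟪A v, u'⟫_𝕜 = 0) :
    ⟪A ((α : 𝕜) • u + (β : 𝕜) • v), (α : 𝕜) • u' + (β : 𝕜) • v'⟫_𝕜 =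
      (α ^ 2 : ℝ) * ⟪A u, u'⟫_𝕜 + (β ^ 2 : ℝ) * ⟪A v, v'⟫_𝕜 := by
  simp only [map_add, map_smul, inner_add_left, inner_add_right, inner_smul_left,
    inner_smul_right, RCLike.conj_ofReal, hu, hv]
  push_cast
  ring

lemma inner_map_eq_zero_of_mem_topologicalClosure_span (A : E →L[𝕜] E) {s : Set E}
    (hs : ∀ x ∈ s, ∀ y ∈ s, ⟪A x, y⟫_𝕜 = 0) {x y : E}
    (hx : x ∈ (Submodule.span 𝕜 s).topologicalClosure)
    (hy : y ∈ (Submodule.span 𝕜 s).topologicalClosure) : ⟪A x, y⟫_𝕜 = 0 := by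
  set K := (Submodule.span 𝕜 s).topologicalClosure
  have hspan : (Submodule.span 𝕜 s).map (A : E →ₗ[𝕜] E) ≤ Kᗮ := by
    rw [Submodule.orthogonal_closure, ← Submodule.isOrtho_iff_le, Submodule.map_span,
      Submodule.isOrtho_span]
    rintro _ ⟨x, hx, rfl⟩ y hy
    exact hs x hx y hy
  have hK : K ≤ Kᗮ.comap (A : E →ₗ[𝕜] E) :=
    Submodule.topologicalClosure_minimal _ (Submodule.map_le_iff_le_comap.mp hspan)
      (K.isClosed_orthogonal.preimage A.continuous)
  exact Submodule.inner_left_of_mem_orthogonal hy (hK hx)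

/-- For a closed subspace `s = L` this is the identity `P_L A P_L = c P_L`. -/
def CompressesTo (A : E →L[𝕜] E) (c : 𝕜) (s : Set E) : Prop :=
  ∀ x ∈ s, ∀ y ∈ s, ⟪A x, y⟫_𝕜 = c * ⟪x, y⟫_𝕜

lemma CompressesTo.mono {A : E →L[𝕜] E} {c : 𝕜} {s t : Set E} (h : CompressesTo A c s)
    (hts : t ⊆ s) : CompressesTo A c t :=
  fun x hx y hy => h x (hts hx) y (hts hy)

lemma CompressesTo.topologicalClosure_span {A : E →L[𝕜] E} {c : 𝕜} {s : Set E}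
    (h : CompressesTo A c s) :
    CompressesTo A c (Submodule.span 𝕜 s).topologicalClosure := by
  have hsub : ∀ x y : E, ⟪(A - (starRingEnd 𝕜 c) • ContinuousLinearMap.id 𝕜 E) x, y⟫_𝕜 =
      ⟪A x, y⟫_𝕜 - c * ⟪x, y⟫_𝕜 := fun x y => by
    simp [inner_sub_left, inner_smul_left]
  intro x hx y hy
  rw [← sub_eq_zero, ← hsub]
  exact inner_map_eq_zero_of_mem_topologicalClosure_span _
    (fun x hx y hy => by rw [hsub, h x hx y hy, sub_self]) hx hy

def Decoupled (T : ι → E →L[𝕜] E) (u v : E) : Prop :=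
  ⟪u, v⟫_𝕜 = 0 ∧ ∀ j, ⟪T j u, v⟫_𝕜 = 0 ∧ ⟪T j v, u⟫_𝕜 = 0

lemma Decoupled.symm {T : ι → E →L[𝕜] E} {u v : E} (h : Decoupled T u v) : Decoupled T v u :=
  ⟨inner_eq_zero_symm.mp h.1, fun j => (h.2 j).symm⟩

lemma Submodule.exists_norm_eq_one_forall_decoupled [Finite ι] (T : ι → E →L[𝕜] E)
    {L : Submodule 𝕜 E} (hL : ¬ FiniteDimensional 𝕜 L) (s : Finset E) :
    ∃ u ∈ L, ‖u‖ = 1 ∧ ∀ v ∈ s, Decoupled T u v := by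
  let φ : s ⊕ (s × ι) ⊕ (s × ι) → E →ₗ[𝕜] 𝕜 :=
    Sum.elim (fun v => innerₛₗ 𝕜 (v : E))
      (Sum.elim (fun p => innerₛₗ 𝕜 (T p.2 p.1)) (fun p => innerₛₗ 𝕜 (p.1 : E) ∘ₗ T p.2))
  obtain ⟨u, huL, hu1, hφ⟩ := L.exists_norm_eq_one_forall_eq_zero φ hL
  refine ⟨u, huL, hu1, fun v hv => ⟨inner_eq_zero_symm.mp (hφ (.inl ⟨v, hv⟩)), fun j =>
    ⟨inner_eq_zero_symm.mp (hφ (.inr (.inr (⟨v, hv⟩, j)))), hφ (.inr (.inl (⟨v, hv⟩, j)))⟩⟩⟩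

lemma exists_orthonormal_seq_decoupled [Finite ι] (T : ι → E →L[𝕜] E)
    {L₁ L₂ : Submodule 𝕜 E} (h₁ : ¬ FiniteDimensional 𝕜 L₁) (h₂ : ¬ FiniteDimensional 𝕜 L₂) :
    ∃ x y : ℕ → E, (∀ k, x k ∈ L₁) ∧ (∀ k, y k ∈ L₂) ∧ Orthonormal 𝕜 x ∧ Orthonormal 𝕜 y ∧
      ∀ k l, Decoupled T (x k) (y l) := by
  classical
  let P : E × E → Prop := fun p =>
    p.1 ∈ L₁ ∧ p.2 ∈ L₂ ∧ ‖p.1‖ = 1 ∧ ‖p.2‖ = 1 ∧ Decoupled T p.1 p.2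
  let r : E × E → E × E → Prop := fun p q =>
    Decoupled T p.1 q.1 ∧ Decoupled T p.2 q.2 ∧ Decoupled T p.1 q.2 ∧ Decoupled T p.2 q.1
  have : Std.Symm r := ⟨fun p q h => ⟨h.1.symm, h.2.1.symm, h.2.2.2.symm, h.2.2.1.symm⟩⟩
  obtain ⟨f, hP, hr⟩ := exists_seq_of_forall_finset_exists' P r fun s _ => by
    let S := s.image Prod.fst ∪ s.image Prod.snd
    have hfst : ∀ p ∈ s, p.1 ∈ S := fun p hp =>
      Finset.mem_union_left _ (Finset.mem_image_of_mem _ hp)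
    have hsnd : ∀ p ∈ s, p.2 ∈ S := fun p hp =>
      Finset.mem_union_right _ (Finset.mem_image_of_mem _ hp)
    obtain ⟨x, hxL, hx1, hxS⟩ := L₁.exists_norm_eq_one_forall_decoupled T h₁ S
    obtain ⟨y, hyL, hy1, hyS⟩ := L₂.exists_norm_eq_one_forall_decoupled T h₂ (insert x S)
    refine ⟨(x, y), ⟨hxL, hyL, hx1, hy1, (hyS x (Finset.mem_insert_self x S)).symm⟩,
      fun p hp => ⟨(hxS p.1 (hfst p hp)).symm, ?_, ?_, (hxS p.2 (hsnd p hp)).symm⟩⟩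
    · exact (hyS p.2 (Finset.mem_insert_of_mem (hsnd p hp))).symm
    · exact (hyS p.1 (Finset.mem_insert_of_mem (hfst p hp))).symm
  refine ⟨fun k => (f k).1, fun k => (f k).2, fun k => (hP k).1, fun k => (hP k).2.1,
    ⟨fun k => (hP k).2.2.1, fun k l hkl => (hr hkl).1.1⟩,
    ⟨fun k => (hP k).2.2.2.1, fun k l hkl => (hr hkl).2.1.1⟩, fun k l => ?_⟩
  rcases eq_or_ne k l with rfl | hkl
  · exact (hP k).2.2.2.2
  · exact (hr hkl).2.2.1

noncomputable def sqrtMix (a b : ℝ) {κ : Type*} (x y : κ → E) : κ → E :=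
  fun k => ((√a : ℝ) : 𝕜) • x k + ((√b : ℝ) : 𝕜) • y k

variable {κ : Type*} {x y : κ → E} {a b : ℝ}

lemma orthonormal_sqrtMix (hx : Orthonormal 𝕜 x) (hy : Orthonormal 𝕜 y)
    (hxy : ∀ k l, ⟪x k, y l⟫_𝕜 = 0) (ha : 0 ≤ a) (hb : 0 ≤ b) (hab : a + b = 1) :
    Orthonormal 𝕜 (sqrtMix (𝕜 := 𝕜) a b x y) := by
  classical
  rw [orthonormal_iff_ite] at hx hy ⊢
  intro k l
  have h := inner_map_smul_add_smul (ContinuousLinearMap.id 𝕜 E) √a √b (hxy k l)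
    (inner_eq_zero_symm.mp (hxy l k))
  simp only [ContinuousLinearMap.id_apply] at h
  simp only [sqrtMix, h, hx, hy, Real.sq_sqrt ha, Real.sq_sqrt hb]
  split_ifs
  · exact_mod_cast by simpa using hab
  · simp

lemma compressesTo_sqrtMix {T : ι → E →L[𝕜] E} {j : ι} {c₁ c₂ : 𝕜}
    (hx : Orthonormal 𝕜 x) (hy : Orthonormal 𝕜 y) (hxy : ∀ k l, Decoupled T (x k) (y l))
    (h₁ : CompressesTo (T j) c₁ (Set.range x)) (h₂ : CompressesTo (T j) c₂ (Set.range y))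
    (ha : 0 ≤ a) (hb : 0 ≤ b) (hab : a + b = 1) :
    CompressesTo (T j) (a • c₁ + b • c₂) (Set.range (sqrtMix (𝕜 := 𝕜) a b x y)) := by
  classical
  rintro _ ⟨k, rfl⟩ _ ⟨l, rfl⟩
  rw [orthonormal_iff_ite] at hx hy
  have h := inner_map_smul_add_smul (ContinuousLinearMap.id 𝕜 E) √a √b (hxy k l).1
    (inner_eq_zero_symm.mp (hxy l k).1)
  simp only [ContinuousLinearMap.id_apply] at h
  simp only [sqrtMix, h, inner_map_smul_add_smul (T j) √a √b ((hxy k l).2 j).1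
    ((hxy l k).2 j).2, h₁ _ ⟨k, rfl⟩ _ ⟨l, rfl⟩, h₂ _ ⟨k, rfl⟩ _ ⟨l, rfl⟩, hx, hy,
    Real.sq_sqrt ha, Real.sq_sqrt hb, RCLike.real_smul_eq_coe_mul]
  split_ifs
  · have : (a : 𝕜) + b = 1 := by exact_mod_cast hab
    linear_combination (-(a * c₁) - b * c₂) * this
  · simp

end

theorem stmt6_general {H : Type*} [NormedAddCommGroup H] [InnerProductSpace ℂ H]
    (n : ℕ) (T : Fin n → H →L[ℂ] H) :
    Convex ℝ {l : Fin n → ℂ | ∃ L : Submodule ℂ H, IsClosed (L : Set H) ∧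
      ¬ FiniteDimensional ℂ ↥L ∧
      ∀ j, ∀ x ∈ L, ∀ y ∈ L, (inner ℂ ((T j) x) y : ℂ) = l j * inner ℂ x y} := by
  rintro l₁ ⟨L₁, -, hL₁, hl₁⟩ l₂ ⟨L₂, -, hL₂, hl₂⟩ a b ha hb hab
  obtain ⟨x, y, hxL, hyL, hx, hy, hxy⟩ := exists_orthonormal_seq_decoupled T hL₁ hL₂
  have hz := orthonormal_sqrtMix hx hy (fun k l => (hxy k l).1) ha hb hab
  refine ⟨(Submodule.span ℂ (Set.range (sqrtMix a b x y))).topologicalClosure,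
    Submodule.isClosed_topologicalClosure _,
    not_finiteDimensional_of_orthonormal hz fun k =>
      Submodule.le_topologicalClosure _ (Submodule.subset_span ⟨k, rfl⟩), fun j => ?_⟩
  have h₁ : CompressesTo (T j) (l₁ j) (Set.range x) :=
    CompressesTo.mono (hl₁ j) (Set.range_subset_iff.mpr hxL)
  have h₂ : CompressesTo (T j) (l₂ j) (Set.range y) :=
    CompressesTo.mono (hl₂ j) (Set.range_subset_iff.mpr hyL)
  exact (compressesTo_sqrtMix hx hy hxy h₁ h₂ ha hb hab).topologicalClosure_span

/-- The infinite numerical range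
`W_∞(𝒯) = {λ : ∃ infinite-dimensional closed subspace L, P_L Tⱼ P_L = λⱼ P_L ∀ j}`
(the operator identity encoded as `⟨Tⱼ x, y⟩ = λⱼ ⟨x, y⟩` for all `x, y ∈ L`)
is a convex subset of `ℂⁿ`. -/
theorem stmt6 {H : Type*} [NormedAddCommGroup H] [InnerProductSpace ℂ H] [CompleteSpace H]
    [TopologicalSpace.SeparableSpace H] (hinf : ¬ FiniteDimensional ℂ H)
    (n : ℕ) (T : Fin n → H →L[ℂ] H) :
    Convex ℝ {l : Fin n → ℂ | ∃ L : Submodule ℂ H, IsClosed (L : Set H) ∧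
      ¬ FiniteDimensional ℂ ↥L ∧
      ∀ j, ∀ x ∈ L, ∀ y ∈ L, (inner ℂ ((T j) x) y : ℂ) = l j * inner ℂ x y} :=
  stmt6_general n T
end

section
/- Let H be an infinite-dimensional separable complex Hilbert space and 𝒯 = (T₁,...,Tₙ) a tuple of bounded operators. The joint essential numerical range W_e(𝒯), defined as the set of λ ∈ ℂⁿ for which some orthonormal sequence (x_k) satisfies ⟨Tⱼ x_k, x_k⟩ → λⱼ for each j, is a convex subset of ℂⁿ. -/
/-!
A point `l` lies in the joint essential numerical range iff for every `ε > 0` and every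
finite-dimensional subspace `F` some unit vector `v ⊥ F` has `‖⟨Tⱼ v, v⟩ - lⱼ‖ < ε` for all `j`:
an orthonormal sequence tends weakly to `0`, so its projections onto `F` tend to `0` and it can
be pushed into `Fᗮ` at vanishing cost; conversely such vectors can be chosen one after another,
each orthogonal to the previous ones, with errors `1 / (k + 1)`.

In this form convexity needs just two vectors: take `x ⊥ F` for `l`, then `y` for `m` orthogonal
to `F`, `x`, all `Tⱼ x` and all `Tⱼ* x`. Every cross term vanishes, so `z = √a x + √b y` is a
unit vector in `Fᗮ` with `⟨Tⱼ z, z⟩ = a ⟨Tⱼ x, x⟩ + b ⟨Tⱼ y, y⟩`.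
-/

open Filter Topology
open scoped InnerProductSpace

section

variable {𝕜 H ι : Type*} [RCLike 𝕜] [NormedAddCommGroup H] [InnerProductSpace 𝕜 H]

def jointQuadraticForm (T : ι → H →L[𝕜] H) (v : H) : ι → 𝕜 := fun j => ⟪T j v, v⟫_𝕜

def jointEssentialNumericalRange (T : ι → H →L[𝕜] H) : Set (ι → 𝕜) :=
  {l | ∃ x : ℕ → H, Orthonormal 𝕜 x ∧
    ∀ j, Tendsto (fun k => ⟪T j (x k), x k⟫_𝕜) atTop (𝓝 (l j))}

def approxJointEssentialNumericalRange [Fintype ι] (T : ι → H →L[𝕜] H) : Set (ι → 𝕜) :=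
  {l | ∀ ε > 0, ∀ F : Submodule 𝕜 H, FiniteDimensional 𝕜 F →
    ∃ v ∈ Fᗮ, ‖v‖ = 1 ∧ dist (jointQuadraticForm T v) l < ε}

theorem Orthonormal.tendsto_inner_left_zero {x : ℕ → H} (hx : Orthonormal 𝕜 x) (e : H) :
    Tendsto (fun k => ⟪e, x k⟫_𝕜) atTop (𝓝 0) := by
  rw [tendsto_zero_iff_norm_tendsto_zero]
  simpa [norm_inner_symm] using (hx.inner_products_summable e).tendsto_atTop_zero.sqrt

theorem Orthonormal.tendsto_starProjection_zero {x : ℕ → H} (hx : Orthonormal 𝕜 x)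
    (F : Submodule 𝕜 H) [FiniteDimensional 𝕜 F] :
    Tendsto (fun k => F.starProjection (x k)) atTop (𝓝 0) := by
  let b := stdOrthonormalBasis 𝕜 F
  have h : Tendsto (fun k => ∑ i, ⟪(b i : H), x k⟫_𝕜 • (b i : H)) atTop
      (𝓝 (∑ i, (0 : 𝕜) • (b i : H))) :=
    tendsto_finsetSum _ fun i _ => (hx.tendsto_inner_left_zero _).smul_const _
  simpa [b.starProjection_eq_sum_rankOne] using h

theorem norm_inv_norm_smul_sub_le {x : H} (hx : ‖x‖ = 1) (w : H) :
    ‖(‖w‖⁻¹ : 𝕜) • w - x‖ ≤ 2 * ‖w - x‖ := by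
  rcases eq_or_ne w 0 with rfl | hw
  · simp [hx]
  have hw' : (‖w‖ : ℝ) ≠ 0 := norm_ne_zero_iff.mpr hw
  calc ‖(‖w‖⁻¹ : 𝕜) • w - x‖ ≤ ‖(‖w‖⁻¹ : 𝕜) • w - w‖ + ‖w - x‖ :=
        norm_sub_le_norm_sub_add_norm_sub _ _ _
    _ = |‖x‖ - ‖w‖| + ‖w - x‖ := by
        have h : (‖w‖⁻¹ : 𝕜) • w - w = ((‖w‖⁻¹ - 1 : ℝ) : 𝕜) • w := by
          push_cast; rw [sub_smul, one_smul]
        rw [h, norm_smul, RCLike.norm_ofReal, ← abs_norm w, ← abs_mul, abs_norm, sub_mul,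
          inv_mul_cancel₀ hw', one_mul, hx]
    _ ≤ ‖w - x‖ + ‖w - x‖ := by gcongr; rw [norm_sub_rev]; exact abs_norm_sub_norm_le _ _
    _ = 2 * ‖w - x‖ := by ring

theorem norm_inner_map_self_sub_le (S : H →L[𝕜] H) (u v : H) :
    ‖⟪S u, u⟫_𝕜 - ⟪S v, v⟫_𝕜‖ ≤ ‖S‖ * ‖u - v‖ * (‖u‖ + ‖v‖) := by
  have h : ⟪S u, u⟫_𝕜 - ⟪S v, v⟫_𝕜 = ⟪S (u - v), u⟫_𝕜 + ⟪S v, u - v⟫_𝕜 := by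
    simp only [map_sub, inner_sub_left, inner_sub_right]; ring
  calc ‖⟪S u, u⟫_𝕜 - ⟪S v, v⟫_𝕜‖ ≤ ‖S (u - v)‖ * ‖u‖ + ‖S v‖ * ‖u - v‖ := by
        rw [h]
        exact (norm_add_le _ _).trans (add_le_add (norm_inner_le_norm _ _) (norm_inner_le_norm _ _))
    _ ≤ ‖S‖ * ‖u - v‖ * ‖u‖ + ‖S‖ * ‖v‖ * ‖u - v‖ := by
        gcongr <;> exact S.le_opNorm _
    _ = ‖S‖ * ‖u - v‖ * (‖u‖ + ‖v‖) := by ring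

theorem norm_jointQuadraticForm_sub_le [Fintype ι] (T : ι → H →L[𝕜] H) (u v : H) :
    ‖jointQuadraticForm T u - jointQuadraticForm T v‖ ≤ ‖T‖ * ‖u - v‖ * (‖u‖ + ‖v‖) := by
  refine (pi_norm_le_iff_of_nonneg (by positivity)).mpr fun j => ?_
  refine (norm_inner_map_self_sub_le (T j) u v).trans ?_
  gcongr
  exact norm_le_pi_norm T j

theorem jointEssentialNumericalRange_subset_approx [Fintype ι] (T : ι → H →L[𝕜] H) :
    jointEssentialNumericalRange T ⊆ approxJointEssentialNumericalRange T := by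
  rintro l ⟨x, hx, hxl⟩ ε hε F hF
  let p k := F.starProjection (x k)
  let v k := (‖x k - p k‖⁻¹ : 𝕜) • (x k - p k)
  have hp : Tendsto p atTop (𝓝 0) := hx.tendsto_starProjection_zero F
  have hvx : Tendsto (fun k => v k - x k) atTop (𝓝 0) := by
    refine squeeze_zero_norm (fun k => ?_) (by simpa using hp.norm.const_mul 2)
    simpa using norm_inv_norm_smul_sub_le (𝕜 := 𝕜) (hx.1 k) (x k - p k)
  have hv1 : ∀ᶠ k in atTop, ‖v k‖ = 1 := by
    filter_upwards [hp.norm.eventually (gt_mem_nhds (by norm_num : ‖(0 : H)‖ < 1))] with k hk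
    refine norm_smul_inv_norm fun h => ?_
    rw [← sub_eq_zero.mp h, hx.1 k] at hk
    exact hk.false
  have hQv : Tendsto (fun k => jointQuadraticForm T (v k)) atTop (𝓝 l) := by
    have hQx : Tendsto (fun k => jointQuadraticForm T (x k)) atTop (𝓝 l) :=
      tendsto_pi_nhds.mpr hxl
    have hdiff : Tendsto (fun k => jointQuadraticForm T (v k) - jointQuadraticForm T (x k))
        atTop (𝓝 0) := by
      refine squeeze_zero_norm' ?_ (by simpa using (hvx.norm.const_mul ‖T‖).mul_const 2)
      filter_upwards [hv1] with k hk
      simpa [hk, hx.1 k, one_add_one_eq_two] using norm_jointQuadraticForm_sub_le T (v k) (x k)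
    simpa using hdiff.add hQx
  obtain ⟨k, hk1, hkl⟩ := (hv1.and (hQv.eventually (Metric.ball_mem_nhds l hε))).exists
  exact ⟨v k, Fᗮ.smul_mem _ (F.sub_starProjection_mem_orthogonal _), hk1, hkl⟩

theorem approxJointEssentialNumericalRange_subset [Fintype ι] (T : ι → H →L[𝕜] H) :
    approxJointEssentialNumericalRange T ⊆ jointEssentialNumericalRange T := by
  intro l hl
  have hstep : ∀ s : Finset (ℕ × H), ∃ q : ℕ × H,
      (‖q.2‖ = 1 ∧ dist (jointQuadraticForm T q.2) l < 1 / (q.1 + 1)) ∧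
      ∀ p ∈ s, p.1 < q.1 ∧ ⟪p.2, q.2⟫_𝕜 = 0 := by
    intro s
    obtain ⟨v, hvF, hv1, hvl⟩ := hl (1 / (s.sup Prod.fst + 1 + 1)) (by positivity)
      (Submodule.span 𝕜 (Prod.snd '' (s : Set (ℕ × H))))
      (FiniteDimensional.span_of_finite 𝕜 (s.finite_toSet.image _))
    refine ⟨(s.sup Prod.fst + 1, v), ⟨hv1, by exact_mod_cast hvl⟩, fun p hp =>
      ⟨Nat.lt_succ_of_le (Finset.le_sup hp), ?_⟩⟩
    exact Submodule.inner_right_of_mem_orthogonal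
      (Submodule.subset_span (Set.mem_image_of_mem _ hp)) hvF
  obtain ⟨f, hfP, hfr⟩ := exists_seq_of_forall_finset_exists _ _ fun s _ => hstep s
  have hmono : StrictMono fun n => (f n).1 := fun m n h => (hfr m n h).1
  refine ⟨fun n => (f n).2, ⟨fun n => (hfP n).1, fun m n hmn => ?_⟩, tendsto_pi_nhds.mp ?_⟩
  · rcases hmn.lt_or_gt with h | h
    · exact (hfr m n h).2
    · exact inner_eq_zero_symm.mp (hfr n m h).2
  · refine tendsto_iff_dist_tendsto_zero.mpr <| squeeze_zero (fun _ => dist_nonneg) (fun n => ?_)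
      tendsto_one_div_add_atTop_nhds_zero_nat
    calc _ ≤ 1 / ((f n).1 + 1 : ℝ) := (hfP n).2.le
      _ ≤ 1 / (n + 1) := by gcongr; exact_mod_cast hmono.id_le n

theorem inner_map_sqrt_smul_add_sqrt_smul (S : H →L[𝕜] H) {x y : H} (hxy : ⟪S x, y⟫_𝕜 = 0)
    (hyx : ⟪S y, x⟫_𝕜 = 0) {a b : ℝ} (ha : 0 ≤ a) (hb : 0 ≤ b) :
    ⟪S ((√a : 𝕜) • x + (√b : 𝕜) • y), (√a : 𝕜) • x + (√b : 𝕜) • y⟫_𝕜 =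
      a * ⟪S x, x⟫_𝕜 + b * ⟪S y, y⟫_𝕜 := by
  have hsq : ∀ {c : ℝ}, 0 ≤ c → (√c : 𝕜) * √c = c := fun hc => by
    rw [← RCLike.ofReal_mul, Real.mul_self_sqrt hc]
  simp only [map_add, map_smul, inner_add_left, inner_add_right, inner_smul_left,
    inner_smul_right, RCLike.conj_ofReal, hxy, hyx, mul_zero, add_zero, zero_add]
  rw [← mul_assoc, ← mul_assoc, hsq ha, hsq hb]

theorem norm_sqrt_smul_add_sqrt_smul {x y : H} (hx : ‖x‖ = 1) (hy : ‖y‖ = 1)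
    (hxy : ⟪x, y⟫_𝕜 = 0) {a b : ℝ} (ha : 0 ≤ a) (hb : 0 ≤ b) (hab : a + b = 1) :
    ‖(√a : 𝕜) • x + (√b : 𝕜) • y‖ = 1 := by
  have h := inner_map_sqrt_smul_add_sqrt_smul (ContinuousLinearMap.id 𝕜 H) hxy
    (inner_eq_zero_symm.mp hxy) ha hb
  simp only [ContinuousLinearMap.id_apply, inner_self_eq_norm_sq_to_K, hx, hy] at h
  rw [RCLike.ofReal_one, one_pow, mul_one, mul_one, ← RCLike.ofReal_add, hab] at h
  exact (pow_eq_one_iff_of_nonneg (norm_nonneg _) two_ne_zero).mp (mod_cast h)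

theorem jointQuadraticForm_sqrt_smul_add_sqrt_smul (T : ι → H →L[𝕜] H) {x y : H}
    (hxy : ∀ j, ⟪T j x, y⟫_𝕜 = 0) (hyx : ∀ j, ⟪T j y, x⟫_𝕜 = 0) {a b : ℝ} (ha : 0 ≤ a)
    (hb : 0 ≤ b) :
    jointQuadraticForm T ((√a : 𝕜) • x + (√b : 𝕜) • y) =
      a • jointQuadraticForm T x + b • jointQuadraticForm T y := by
  ext j
  simp only [jointQuadraticForm, Pi.add_apply, Pi.smul_apply, RCLike.real_smul_eq_coe_mul]
  exact inner_map_sqrt_smul_add_sqrt_smul (T j) (hxy j) (hyx j) ha hb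

theorem convex_approxJointEssentialNumericalRange [CompleteSpace H] [Fintype ι]
    (T : ι → H →L[𝕜] H) : Convex ℝ (approxJointEssentialNumericalRange T) := by
  intro l hl m hm a b ha hb hab ε hε F hF
  obtain ⟨x, hxF, hx1, hxl⟩ := hl ε hε F hF
  let X : Set H :=
    insert x (Set.range (fun j => T j x) ∪ Set.range fun j => ContinuousLinearMap.adjoint (T j) x)
  have : FiniteDimensional 𝕜 (Submodule.span 𝕜 X) := FiniteDimensional.span_of_finite 𝕜
    (((Set.finite_range _).union (Set.finite_range _)).insert x)
  obtain ⟨y, hyG, hy1, hym⟩ := hm ε hε (F ⊔ Submodule.span 𝕜 X) inferInstance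
  have hXy : ∀ u ∈ X, ⟪u, y⟫_𝕜 = 0 := fun u hu =>
    Submodule.inner_right_of_mem_orthogonal
      (Submodule.mem_sup_right (Submodule.subset_span hu)) hyG
  have hTxy : ∀ j, ⟪T j x, y⟫_𝕜 = 0 := fun j => hXy _ (.inr (.inl ⟨j, rfl⟩))
  have hTyx : ∀ j, ⟪T j y, x⟫_𝕜 = 0 := fun j => by
    rw [← ContinuousLinearMap.adjoint_inner_right, inner_eq_zero_symm]
    exact hXy _ (.inr (.inr ⟨j, rfl⟩))
  have hxy : ⟪x, y⟫_𝕜 = 0 := hXy x (Set.mem_insert x _)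
  refine ⟨(√a : 𝕜) • x + (√b : 𝕜) • y, Fᗮ.add_mem (Fᗮ.smul_mem _ hxF)
    (Fᗮ.smul_mem _ (Submodule.orthogonal_le le_sup_left hyG)),
    norm_sqrt_smul_add_sqrt_smul hx1 hy1 hxy ha hb hab, ?_⟩
  rw [jointQuadraticForm_sqrt_smul_add_sqrt_smul T hTxy hTyx ha hb, dist_eq_norm,
    ← mem_ball_zero_iff]
  rw [dist_eq_norm, ← mem_ball_zero_iff] at hxl hym
  convert convex_ball (0 : ι → 𝕜) ε hxl hym ha hb hab using 1
  rw [smul_sub, smul_sub]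
  abel

theorem jointEssentialNumericalRange_eq_approx [Fintype ι] (T : ι → H →L[𝕜] H) :
    jointEssentialNumericalRange T = approxJointEssentialNumericalRange T :=
  (jointEssentialNumericalRange_subset_approx T).antisymm
    (approxJointEssentialNumericalRange_subset T)

theorem convex_jointEssentialNumericalRange [CompleteSpace H] [Fintype ι]
    (T : ι → H →L[𝕜] H) : Convex ℝ (jointEssentialNumericalRange T) :=
  jointEssentialNumericalRange_eq_approx T ▸ convex_approxJointEssentialNumericalRange T

end

theorem stmt7_general {H : Type*} [NormedAddCommGroup H] [InnerProductSpace ℂ H] [CompleteSpace H]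
    (n : ℕ) (T : Fin n → H →L[ℂ] H) :
    Convex ℝ {l : Fin n → ℂ | ∃ x : ℕ → H, Orthonormal ℂ x ∧
      ∀ j, Tendsto (fun k => (inner ℂ ((T j) (x k)) (x k) : ℂ)) atTop (nhds (l j))} :=
  convex_jointEssentialNumericalRange T

/-- The joint essential numerical range
`W_e(𝒯) = {λ : ∃ orthonormal sequence (x_k), ⟨Tⱼ x_k, x_k⟩ → λⱼ for all j}`
is a convex subset of `ℂⁿ`. -/
theorem stmt7 {H : Type*} [NormedAddCommGroup H] [InnerProductSpace ℂ H] [CompleteSpace H]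
    [TopologicalSpace.SeparableSpace H] (hinf : ¬ FiniteDimensional ℂ H)
    (n : ℕ) (T : Fin n → H →L[ℂ] H) :
    Convex ℝ {l : Fin n → ℂ | ∃ x : ℕ → H, Orthonormal ℂ x ∧
      ∀ j, Tendsto (fun k => (inner ℂ ((T j) (x k)) (x k) : ℂ)) atTop (nhds (l j))} :=
  stmt7_general n T
end

section
/- Let H be an infinite-dimensional complex Hilbert space, 𝒯 = (T₁,...,Tₙ) a tuple of bounded operators, and λ ∈ W_e(𝒯). Then for every δ > 0 and every closed subspace M ⊆ H of finite codimension there exists a unit vector x ∈ M with |⟨Tⱼx, x⟩ − λⱼ| < δ for all j = 1,...,n. -/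
/-!
By Bessel's inequality an orthonormal sequence `x k` tends weakly to `0`, so its projection onto
the finite-dimensional `Mᗮ` tends to `0` in norm. Hence the projections `y k` of `x k` onto `M`
satisfy `‖y k - x k‖ → 0`, and therefore `‖y k‖ → 1` and `⟪Tⱼ y k, y k⟫ → λⱼ`. Normalising `y k`
gives unit vectors in `M` whose quadratic forms still converge to `λ`; a late one works.
-/

open Filter Topology

open scoped InnerProductSpace

section

variable {𝕜 E ι : Type*} [RCLike 𝕜] [NormedAddCommGroup E] [InnerProductSpace 𝕜 E] {l : Filter ι}

theorem Orthonormal.tendsto_inner_atTop_zero {x : ℕ → E} (hx : Orthonormal 𝕜 x) (w : E) :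
    Tendsto (fun k => ⟪w, x k⟫_𝕜) atTop (𝓝 0) := by
  have hsq := (hx.inner_products_summable w).tendsto_atTop_zero.sqrt
  simp only [Real.sqrt_sq (norm_nonneg _), Real.sqrt_zero] at hsq
  exact tendsto_zero_iff_norm_tendsto_zero.2 (by simpa only [norm_inner_symm] using hsq)

theorem Submodule.tendsto_starProjection_zero (K : Submodule 𝕜 E)
    [FiniteDimensional 𝕜 K] {u : ι → E} (hu : ∀ w, Tendsto (fun k => ⟪w, u k⟫_𝕜) l (𝓝 0)) :
    Tendsto (fun k => K.starProjection (u k)) l (𝓝 0) := by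
  have hsum := tendsto_finsetSum Finset.univ fun i _ =>
    (hu ((stdOrthonormalBasis 𝕜 K) i : E)).smul_const ((stdOrthonormalBasis 𝕜 K) i : E)
  simpa [(stdOrthonormalBasis 𝕜 K).starProjection_eq_sum_rankOne] using hsum

theorem tendsto_norm_of_tendsto_sub {u v : ι → E} {a : ℝ}
    (hu : Tendsto (fun k => ‖u k‖) l (𝓝 a)) (huv : Tendsto (fun k => u k - v k) l (𝓝 0)) :
    Tendsto (fun k => ‖v k‖) l (𝓝 a) := by
  refine tendsto_of_tendsto_of_tendsto_of_le_of_le (by simpa using hu.sub huv.norm)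
    (by simpa using hu.add huv.norm) (fun k => ?_) (fun k => ?_)
  · simpa using norm_sub_norm_le (u k) (u k - v k)
  · simpa using norm_sub_le (u k) (u k - v k)

namespace ContinuousLinearMap

theorem norm_inner_apply_self_sub_le (T : E →L[𝕜] E) (u v : E) :
    ‖⟪T u, u⟫_𝕜 - ⟪T v, v⟫_𝕜‖ ≤ ‖T‖ * (‖u‖ + ‖v‖) * ‖u - v‖ := by
  have hsplit : ⟪T u, u⟫_𝕜 - ⟪T v, v⟫_𝕜 = ⟪T (u - v), u⟫_𝕜 + ⟪T v, u - v⟫_𝕜 := by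
    rw [map_sub, inner_sub_left, inner_sub_right]; ring
  calc ‖⟪T u, u⟫_𝕜 - ⟪T v, v⟫_𝕜‖
      ≤ ‖T (u - v)‖ * ‖u‖ + ‖T v‖ * ‖u - v‖ := by
        rw [hsplit]
        exact (norm_add_le _ _).trans (add_le_add (norm_inner_le_norm _ _) (norm_inner_le_norm _ _))
    _ ≤ ‖T‖ * ‖u - v‖ * ‖u‖ + ‖T‖ * ‖v‖ * ‖u - v‖ := by
        gcongr <;> exact T.le_opNorm _
    _ = ‖T‖ * (‖u‖ + ‖v‖) * ‖u - v‖ := by ring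

theorem tendsto_inner_apply_self_of_tendsto_sub (T : E →L[𝕜] E)
    {u v : ι → E} {μ : 𝕜} {C : ℝ} (hu : Tendsto (fun k => ⟪T (u k), u k⟫_𝕜) l (𝓝 μ))
    (hCu : ∀ k, ‖u k‖ ≤ C) (hCv : ∀ k, ‖v k‖ ≤ C) (huv : Tendsto (fun k => u k - v k) l (𝓝 0)) :
    Tendsto (fun k => ⟪T (v k), v k⟫_𝕜) l (𝓝 μ) := by
  have hdiff : Tendsto (fun k => ⟪T (u k), u k⟫_𝕜 - ⟪T (v k), v k⟫_𝕜) l (𝓝 0) := by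
    refine squeeze_zero_norm (fun k => (T.norm_inner_apply_self_sub_le _ _).trans ?_)
      (by simpa using tendsto_const_nhds (x := ‖T‖ * (C + C)) |>.mul huv.norm)
    gcongr <;> simp [hCu, hCv]
  simpa using hu.sub hdiff

theorem inner_apply_smul_self (T : E →L[𝕜] E) (c : 𝕜) (v : E) :
    ⟪T (c • v), c • v⟫_𝕜 = ((‖c‖ ^ 2 : ℝ) : 𝕜) * ⟪T v, v⟫_𝕜 := by
  rw [map_smul, inner_smul_left, inner_smul_right, ← mul_assoc, RCLike.conj_mul]
  norm_cast

theorem tendsto_inner_apply_normalize (T : E →L[𝕜] E) {u : ι → E}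
    {μ : 𝕜} (hu : Tendsto (fun k => ⟪T (u k), u k⟫_𝕜) l (𝓝 μ))
    (hnorm : Tendsto (fun k => ‖u k‖) l (𝓝 1)) :
    Tendsto (fun k => ⟪T ((‖u k‖⁻¹ : 𝕜) • u k), (‖u k‖⁻¹ : 𝕜) • u k⟫_𝕜) l (𝓝 μ) := by
  have hscale : Tendsto (fun k => ((‖u k‖⁻¹ ^ 2 : ℝ) : 𝕜)) l (𝓝 1) := by
    simpa [Function.comp_def] using
      ((RCLike.continuous_ofReal (K := 𝕜)).tendsto _).comp ((hnorm.inv₀ one_ne_zero).pow 2)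
  refine (one_mul μ ▸ hscale.mul hu).congr fun k => ?_
  rw [inner_apply_smul_self, norm_inv, RCLike.norm_ofReal, abs_norm]

end ContinuousLinearMap

end

theorem stmt8_general {H : Type*} [NormedAddCommGroup H] [InnerProductSpace ℂ H] [CompleteSpace H]
    (n : ℕ) (T : Fin n → H →L[ℂ] H) (l : Fin n → ℂ)
    (h : ∃ x : ℕ → H, Orthonormal ℂ x ∧
      ∀ j, Tendsto (fun k => (inner ℂ ((T j) (x k)) (x k) : ℂ)) atTop (nhds (l j))) :
    ∀ δ : ℝ, 0 < δ → ∀ M : Submodule ℂ H, IsClosed (M : Set H) →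
      FiniteDimensional ℂ ↥Mᗮ →
      ∃ x ∈ M, ‖x‖ = 1 ∧ ∀ j, ‖(inner ℂ ((T j) x) x : ℂ) - l j‖ < δ := by
  intro δ hδ M hM _
  obtain ⟨x, hx, hTx⟩ := h
  have : CompleteSpace M := hM.completeSpace_coe
  set y := fun k => M.starProjection (x k)
  have hxy : Tendsto (fun k => x k - y k) atTop (𝓝 0) := by
    simpa [y] using Mᗮ.tendsto_starProjection_zero hx.tendsto_inner_atTop_zero
  have hy : Tendsto (fun k => ‖y k‖) atTop (𝓝 1) :=
    tendsto_norm_of_tendsto_sub (by simp [hx.1]) hxy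
  have hTy : ∀ j, Tendsto (fun k => ⟪T j (y k), y k⟫_ℂ) atTop (𝓝 (l j)) := fun j =>
    (T j).tendsto_inner_apply_self_of_tendsto_sub (hTx j) (fun k => (hx.1 k).le)
      (fun k => (M.norm_starProjection_apply_le (x k)).trans (hx.1 k).le) hxy
  obtain ⟨k, hk, hyk⟩ := (eventually_all.2 (fun j =>
      ((T j).tendsto_inner_apply_normalize (hTy j) hy).eventually (Metric.ball_mem_nhds _ hδ))
    |>.and (hy.eventually_ne one_ne_zero)).exists
  refine ⟨_, M.smul_mem _ (M.starProjection_apply_mem _), norm_smul_inv_norm (norm_ne_zero_iff.1 hyk),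
    fun j => by simpa only [Metric.mem_ball, dist_eq_norm] using hk j⟩

/-- If `λ ∈ W_e(𝒯)` then for every `δ > 0` and every closed subspace `M`
of finite codimension there is a unit vector `x ∈ M` with `|⟨Tⱼ x, x⟩ − λⱼ| < δ` for all `j`. -/
theorem stmt8 {H : Type*} [NormedAddCommGroup H] [InnerProductSpace ℂ H] [CompleteSpace H]
    (hinf : ¬ FiniteDimensional ℂ H)
    (n : ℕ) (T : Fin n → H →L[ℂ] H) (l : Fin n → ℂ)
    (h : ∃ x : ℕ → H, Orthonormal ℂ x ∧
      ∀ j, Tendsto (fun k => (inner ℂ ((T j) (x k)) (x k) : ℂ)) atTop (nhds (l j))) :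
    ∀ δ : ℝ, 0 < δ → ∀ M : Submodule ℂ H, IsClosed (M : Set H) →
      FiniteDimensional ℂ ↥Mᗮ →
      ∃ x ∈ M, ‖x‖ = 1 ∧ ∀ j, ‖(inner ℂ ((T j) x) x : ℂ) - l j‖ < δ :=
  stmt8_general n T l h
end

section
/- Let H be an infinite-dimensional complex Hilbert space and 𝒯 = (T₁,...,Tₙ) a tuple of bounded operators. Suppose λ ∈ ℂⁿ is such that for every δ > 0 and every closed subspace M ⊆ H of finite codimension there exists a unit vector x ∈ M with |⟨Tⱼx, x⟩ − λⱼ| < δ for all j. Then λ ∈ W_e(𝒯), i.e., there exists an orthonormal sequence (x_k) in H with ⟨Tⱼx_k, x_k⟩ → λⱼ for each j. -/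
/-!
Choose the vectors one at a time. Once `x₀, …, x_{k-1}` are chosen, the orthogonal complement
`M` of their span is closed with `Mᗮ` equal to that finite-dimensional span, so the hypothesis
yields a unit vector `x_k ∈ M` whose compressions `⟨Tⱼ x_k, x_k⟩` are within `1 / (k + 1)` of `λ`.
-/

open Filter Topology
open scoped InnerProductSpace

section

variable {𝕜 H : Type*} [RCLike 𝕜] [NormedAddCommGroup H] [InnerProductSpace 𝕜 H]

theorem orthonormal_of_inner_eq_zero_of_lt {ι : Type*} [LinearOrder ι] {v : ι → H}
    (hnorm : ∀ i, ‖v i‖ = 1) (horth : ∀ i j, i < j → ⟪v i, v j⟫_𝕜 = 0) : Orthonormal 𝕜 v :=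
  ⟨hnorm, fun i j hij =>
    hij.lt_or_gt.elim (horth i j) fun hji => inner_eq_zero_symm.1 (horth j i hji)⟩

theorem exists_orthonormal_tendsto_of_forall_finset {X : Type*} [PseudoMetricSpace X]
    (f : H → X) (a : X)
    (h : ∀ ε > 0, ∀ s : Finset H, ∃ x, ‖x‖ = 1 ∧ (∀ y ∈ s, ⟪y, x⟫_𝕜 = 0) ∧ dist (f x) a < ε) :
    ∃ x : ℕ → H, Orthonormal 𝕜 x ∧ Tendsto (f ∘ x) atTop (𝓝 a) := by
  classical
  -- Tag each chosen vector with the index `m` of the precision `1 / (m + 1)` it achieves.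
  obtain ⟨g, hg, hgr⟩ := exists_seq_of_forall_finset_exists
    (fun p : ℕ × H => ‖p.2‖ = 1 ∧ dist (f p.2) a < 1 / (p.1 + 1))
    (fun p q => p.1 < q.1 ∧ ⟪p.2, q.2⟫_𝕜 = 0) fun s _ => by
      obtain ⟨x, hx1, hxs, hxa⟩ :=
        h (1 / (s.sup Prod.fst + 1 + 1)) (by positivity) (s.image Prod.snd)
      refine ⟨(s.sup Prod.fst + 1, x), ⟨hx1, by exact_mod_cast hxa⟩, fun p hp => ?_⟩
      exact ⟨Nat.lt_succ_of_le (Finset.le_sup hp), hxs _ (Finset.mem_image_of_mem _ hp)⟩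
  have hmono : StrictMono fun k => (g k).1 := fun i j hij => (hgr i j hij).1
  refine ⟨fun k => (g k).2,
    orthonormal_of_inner_eq_zero_of_lt (fun k => (hg k).1) fun i j hij => (hgr i j hij).2, ?_⟩
  rw [tendsto_iff_dist_tendsto_zero]
  refine squeeze_zero (fun _ => dist_nonneg) (fun k => ((hg k).2.trans_le ?_).le)
    tendsto_one_div_add_atTop_nhds_zero_nat
  gcongr
  exact_mod_cast hmono.le_apply

theorem exists_unit_orthogonal_finset_of_forall_finiteCodim {P : H → Prop}
    (h : ∀ M : Submodule 𝕜 H, IsClosed (M : Set H) → FiniteDimensional 𝕜 Mᗮ →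
      ∃ x ∈ M, ‖x‖ = 1 ∧ P x)
    (s : Finset H) : ∃ x, ‖x‖ = 1 ∧ (∀ y ∈ s, ⟪y, x⟫_𝕜 = 0) ∧ P x := by
  set K := Submodule.span 𝕜 (s : Set H)
  have hK : FiniteDimensional 𝕜 Kᗮᗮ := by
    rw [K.orthogonal_orthogonal]
    exact FiniteDimensional.span_finset 𝕜 s
  obtain ⟨x, hxK, hx1, hPx⟩ := h Kᗮ K.isClosed_orthogonal hK
  exact ⟨x, hx1, fun y hy => hxK y (Submodule.subset_span hy), hPx⟩

end

theorem stmt9_general {H : Type*} [NormedAddCommGroup H] [InnerProductSpace ℂ H]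
    (n : ℕ) (T : Fin n → H →L[ℂ] H) (l : Fin n → ℂ)
    (h : ∀ δ : ℝ, 0 < δ → ∀ M : Submodule ℂ H, IsClosed (M : Set H) →
      FiniteDimensional ℂ ↥Mᗮ →
      ∃ x ∈ M, ‖x‖ = 1 ∧ ∀ j, ‖(inner ℂ ((T j) x) x : ℂ) - l j‖ < δ) :
    ∃ x : ℕ → H, Orthonormal ℂ x ∧
      ∀ j, Tendsto (fun k => (inner ℂ ((T j) (x k)) (x k) : ℂ)) atTop (nhds (l j)) := by
  obtain ⟨x, hx, hlim⟩ := exists_orthonormal_tendsto_of_forall_finset (𝕜 := ℂ)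
    (fun x j => ⟪T j x, x⟫_ℂ) l fun δ hδ s => by
      refine exists_unit_orthogonal_finset_of_forall_finiteCodim (fun M hM hMfin => ?_) s
      obtain ⟨x, hxM, hx1, hxl⟩ := h δ hδ M hM hMfin
      exact ⟨x, hxM, hx1, (dist_pi_lt_iff hδ).2 fun j => by simpa [dist_eq_norm] using hxl j⟩
  exact ⟨x, hx, tendsto_pi_nhds.1 hlim⟩

/-- If for every `δ > 0` and every closed subspace `M` of finite codimension
there is a unit vector `x ∈ M` with `|⟨Tⱼ x, x⟩ − λⱼ| < δ` for all `j`, then `λ ∈ W_e(𝒯)`,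
i.e. there is an orthonormal sequence `(x_k)` with `⟨Tⱼ x_k, x_k⟩ → λⱼ` for each `j`. -/
theorem stmt9 {H : Type*} [NormedAddCommGroup H] [InnerProductSpace ℂ H] [CompleteSpace H]
    (hinf : ¬ FiniteDimensional ℂ H)
    (n : ℕ) (T : Fin n → H →L[ℂ] H) (l : Fin n → ℂ)
    (h : ∀ δ : ℝ, 0 < δ → ∀ M : Submodule ℂ H, IsClosed (M : Set H) →
      FiniteDimensional ℂ ↥Mᗮ →
      ∃ x ∈ M, ‖x‖ = 1 ∧ ∀ j, ‖(inner ℂ ((T j) x) x : ℂ) - l j‖ < δ) :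
    ∃ x : ℕ → H, Orthonormal ℂ x ∧
      ∀ j, Tendsto (fun k => (inner ℂ ((T j) (x k)) (x k) : ℂ)) atTop (nhds (l j)) :=
  stmt9_general n T l h
end

section
/- Let H be a complex Hilbert space, n, r ∈ ℕ, let A₁,...,A_r be bounded operators on H, and let α₁,...,α_r ≥ 0 with ∑ⱼ αⱼ = 1. Then there exists a closed subspace M of the r-fold direct sum H^r such that the compression of the direct sum operator ⊕ⱼ Aⱼ to M is unitarily equivalent to ∑ⱼ αⱼ Aⱼ acting on H. -/
/-!
Embed `H` into `H^r` by `x ↦ (√αⱼ x)ⱼ`. Since `∑ⱼ αⱼ = 1` this map is an isometry, and since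
`⊕ⱼ Aⱼ` acts coordinatewise, `⟨(⊕ⱼ Aⱼ)(√αⱼ x)ⱼ, (√αⱼ y)ⱼ⟩ = ∑ⱼ αⱼ ⟨Aⱼ x, y⟩`. So the
compression of `⊕ⱼ Aⱼ` to the (closed) range of the embedding is `∑ⱼ αⱼ Aⱼ` transported along it.
-/

namespace PiLp

variable {ι 𝕜 E : Type*} [RCLike 𝕜] [NormedAddCommGroup E] [InnerProductSpace 𝕜 E]

def weightedDiagonal (c : ι → 𝕜) : E →ₗ[𝕜] PiLp 2 (fun _ : ι => E) where
  toFun x := WithLp.toLp 2 fun j => c j • x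
  map_add' x y := by ext j; simp [smul_add]
  map_smul' a x := by ext j; simp [smul_comm (c j) a x]

@[simp]
theorem weightedDiagonal_apply (c : ι → 𝕜) (x : E) (j : ι) :
    weightedDiagonal c x j = c j • x :=
  rfl

variable [Fintype ι]

theorem inner_weightedDiagonal_of_forall_apply (c : ι → 𝕜) (A : ι → E →L[𝕜] E)
    (S : PiLp 2 (fun _ : ι => E) → PiLp 2 (fun _ : ι => E)) (hS : ∀ z i, S z i = A i (z i))
    (x y : E) :
    inner 𝕜 (S (weightedDiagonal c x)) (weightedDiagonal c y)
      = inner 𝕜 ((∑ j, ((‖c j‖ ^ 2 : ℝ) : 𝕜) • A j) x) y := by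
  simp only [PiLp.inner_apply, hS, weightedDiagonal_apply, map_smul, inner_smul_left,
    inner_smul_right, FunLike.coe_sum, Finset.sum_apply, FunLike.coe_smul,
    Pi.smul_apply, sum_inner, ← mul_assoc, RCLike.mul_conj, map_pow,
    RCLike.conj_ofReal]

theorem inner_weightedDiagonal_weightedDiagonal {c : ι → 𝕜} (hc : ∑ j, ‖c j‖ ^ 2 = 1)
    (x y : E) : inner 𝕜 (weightedDiagonal c x) (weightedDiagonal c y) = inner 𝕜 x y := by
  refine (inner_weightedDiagonal_of_forall_apply c (fun _ => ContinuousLinearMap.id 𝕜 E) id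
    (fun _ _ => rfl) x y).trans ?_
  rw [← Finset.sum_smul, ← RCLike.ofReal_sum, hc, RCLike.ofReal_one, one_smul,
    ContinuousLinearMap.id_apply]

noncomputable def weightedDiagonalIsometry {c : ι → 𝕜} (hc : ∑ j, ‖c j‖ ^ 2 = 1) :
    E →ₗᵢ[𝕜] PiLp 2 (fun _ : ι => E) :=
  (weightedDiagonal c).isometryOfInner (inner_weightedDiagonal_weightedDiagonal hc)

end PiLp

theorem LinearIsometry.isClosed_range_toLinearMap {𝕜 E F : Type*} [RCLike 𝕜]
    [NormedAddCommGroup E] [NormedSpace 𝕜 E] [CompleteSpace E]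
    [NormedAddCommGroup F] [NormedSpace 𝕜 F] (f : E →ₗᵢ[𝕜] F) :
    IsClosed (LinearMap.range f.toLinearMap : Set F) := by
  rw [LinearMap.coe_range]
  exact f.isometry.isClosedEmbedding.isClosed_range

theorem stmt10_general {H : Type*} [NormedAddCommGroup H] [InnerProductSpace ℂ H] [CompleteSpace H]
    (r : ℕ) (A : Fin r → H →L[ℂ] H)
    (α : Fin r → ℝ) (hα : ∀ j, 0 ≤ α j) (hs : ∑ j, α j = 1)
    (S : PiLp 2 (fun _ : Fin r => H) →L[ℂ] PiLp 2 (fun _ : Fin r => H))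
    (hS : ∀ (x : PiLp 2 (fun _ : Fin r => H)) (i : Fin r), S x i = A i (x i)) :
    ∃ M : Submodule ℂ (PiLp 2 (fun _ : Fin r => H)), IsClosed (M : Set (PiLp 2 (fun _ : Fin r => H))) ∧
      ∃ U : H ≃ₗᵢ[ℂ] M, ∀ x y : H,
        (inner ℂ (S ((U x : M) : PiLp 2 (fun _ : Fin r => H)))
          ((U y : M) : PiLp 2 (fun _ : Fin r => H)) : ℂ)
          = inner ℂ ((∑ j, (α j : ℂ) • A j) x) y := by
  set c : Fin r → ℂ := fun j => (Real.sqrt (α j) : ℂ)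
  have hc_sq : ∀ j, ‖c j‖ ^ 2 = α j := fun j => by
    simp [c, Real.sq_sqrt (hα j)]
  let f : H →ₗᵢ[ℂ] PiLp 2 (fun _ : Fin r => H) :=
    PiLp.weightedDiagonalIsometry (c := c) (by simpa only [hc_sq] using hs)
  refine ⟨LinearMap.range f.toLinearMap, f.isClosed_range_toLinearMap, f.equivRange, ?_⟩
  intro x y
  have hcompression := PiLp.inner_weightedDiagonal_of_forall_apply c A S hS x y
  simp only [hc_sq] at hcompression
  exact hcompression

/-- if `S = ⊕ⱼ Aⱼ` acts coordinatewise on the `r`-fold Hilbert direct sum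
`H^r`, and `α₁,...,α_r ≥ 0` sum to `1`, then there is a closed subspace `M ⊆ H^r` such
that the compression of `S` to `M` is unitarily equivalent to `∑ⱼ αⱼ Aⱼ` on `H`; the
unitary equivalence is expressed via a linear isometric equivalence `U : H ≃ₗᵢ M` with
`⟨S (U x), U y⟩ = ⟨(∑ⱼ αⱼ Aⱼ) x, y⟩` for all `x, y ∈ H`. -/
theorem stmt10 {H : Type*} [NormedAddCommGroup H] [InnerProductSpace ℂ H] [CompleteSpace H]
    (n r : ℕ) (A : Fin r → H →L[ℂ] H)
    (α : Fin r → ℝ) (hα : ∀ j, 0 ≤ α j) (hs : ∑ j, α j = 1)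
    (S : PiLp 2 (fun _ : Fin r => H) →L[ℂ] PiLp 2 (fun _ : Fin r => H))
    (hS : ∀ (x : PiLp 2 (fun _ : Fin r => H)) (i : Fin r), S x i = A i (x i)) :
    ∃ M : Submodule ℂ (PiLp 2 (fun _ : Fin r => H)), IsClosed (M : Set (PiLp 2 (fun _ : Fin r => H))) ∧
      ∃ U : H ≃ₗᵢ[ℂ] M, ∀ x y : H,
        (inner ℂ (S ((U x : M) : PiLp 2 (fun _ : Fin r => H)))
          ((U y : M) : PiLp 2 (fun _ : Fin r => H)) : ℂ)
          = inner ℂ ((∑ j, (α j : ℂ) • A j) x) y :=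
  stmt10_general r A α hα hs S hS
end

section
/- Let K be a complex Hilbert space, U a unitary operator on K, and k ∈ ℕ with k ≥ 1. For 0 ≤ j ≤ k−1 let Eⱼ be the spectral subspace of U corresponding to the arc {e^{2πit} : j/k ≤ t < (j+1)/k}, and define D on K by Dx = e^{2πij/k} x for x ∈ Eⱼ. Then ‖Uⁿ − Dⁿ‖ ≤ 2πn/k for all n ∈ ℕ. -/
/-!
On each `E j` the operator `U` restricts to a unitary whose spectrum lies on an arc of length
`2π/k` starting at `λⱼ = e^{2πij/k}`. Being normal, its distance to `λⱼ` is the spectral radius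
of `V j - λⱼ`, hence at most `2π/k`. Since the `E j` are orthogonal with dense span, these
blockwise bounds glue to `‖U - D‖ ≤ 2π/k`, and as `‖U‖, ‖D‖ ≤ 1` the telescoping identity
`Uⁿ⁺¹ - Dⁿ⁺¹ = U (Uⁿ - Dⁿ) + (U - D) Dⁿ` gives `‖Uⁿ - Dⁿ‖ ≤ n ‖U - D‖`.
-/

open scoped Real

section SeminormedRing

variable {R : Type*} [SeminormedRing R]

lemma norm_mul_pow_le_of_norm_le_one {b : R} (hb : ‖b‖ ≤ 1) (x : R) (n : ℕ) :
    ‖x * b ^ n‖ ≤ ‖x‖ := by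
  induction n with
  | zero => simp
  | succ n ih =>
    calc ‖x * b ^ (n + 1)‖ = ‖x * b ^ n * b‖ := by rw [pow_succ, mul_assoc]
      _ ≤ ‖x * b ^ n‖ * ‖b‖ := norm_mul_le _ _
      _ ≤ ‖x‖ := (mul_le_of_le_one_right (norm_nonneg _) hb).trans ih

lemma norm_pow_sub_pow_le_of_norm_le_one {a b : R} (ha : ‖a‖ ≤ 1) (hb : ‖b‖ ≤ 1) (n : ℕ) :
    ‖a ^ n - b ^ n‖ ≤ n * ‖a - b‖ := by
  induction n with
  | zero => simp
  | succ n ih =>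
    have hsplit : a ^ (n + 1) - b ^ (n + 1) = a * (a ^ n - b ^ n) + (a - b) * b ^ n := by
      rw [mul_sub, sub_mul, pow_succ', pow_succ']; abel
    calc ‖a ^ (n + 1) - b ^ (n + 1)‖ ≤ ‖a * (a ^ n - b ^ n)‖ + ‖(a - b) * b ^ n‖ :=
          hsplit ▸ norm_add_le _ _
      _ ≤ ‖a ^ n - b ^ n‖ + ‖a - b‖ :=
          add_le_add ((norm_mul_le _ _).trans (mul_le_of_le_one_left (norm_nonneg _) ha))
            (norm_mul_pow_le_of_norm_le_one hb _ n)
      _ ≤ (n + 1 : ℕ) * ‖a - b‖ := by push_cast; linarith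

end SeminormedRing

lemma norm_exp_two_pi_I_mul_sub_le (s t : ℝ) :
    ‖Complex.exp (2 * π * Complex.I * t) - Complex.exp (2 * π * Complex.I * s)‖ ≤
      2 * π * |t - s| := by
  have hfactor : Complex.exp (2 * π * Complex.I * t) - Complex.exp (2 * π * Complex.I * s) =
      Complex.exp (↑(2 * π * s) * Complex.I) *
        (Complex.exp (Complex.I * ↑(2 * π * (t - s))) - 1) := by
    rw [mul_sub, ← Complex.exp_add]; push_cast; ring_nf
  rw [hfactor, norm_mul, Complex.norm_exp_ofReal_mul_I, one_mul]
  simpa [abs_mul, abs_of_pos Real.pi_pos] using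
    Real.norm_exp_I_mul_ofReal_sub_one_le (x := 2 * π * (t - s))

lemma IsStarNormal.norm_sub_algebraMap_le {A : Type*} [CStarAlgebra A] {a : A} [IsStarNormal a]
    {c : ℂ} {r : ℝ} (hr : 0 ≤ r) (h : ∀ z ∈ spectrum ℂ a, ‖z - c‖ ≤ r) :
    ‖a - algebraMap ℂ A c‖ ≤ r := by
  have hcfc : cfc (fun z => z - c) a = a - algebraMap ℂ A c := by
    rw [cfc_sub (fun z => z) (fun _ => c), cfc_id' ℂ a, cfc_const c a]
  exact hcfc ▸ norm_cfc_le hr h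

lemma ContinuousLinearMap.mem_unitary_of_norm_map {𝕜 H : Type*} [RCLike 𝕜] [NormedAddCommGroup H]
    [InnerProductSpace 𝕜 H] [CompleteSpace H] {T : H →L[𝕜] H} (hT : ∀ x, ‖T x‖ = ‖x‖)
    (hunit : IsUnit T) : T ∈ unitary (H →L[𝕜] H) :=
  hunit.mem_unitary_of_star_mul_self (T.norm_map_iff_adjoint_comp_self.mp hT)

lemma ContinuousLinearMap.opNorm_le_of_orthogonalFamily {𝕜 H ι : Type*} [RCLike 𝕜]
    [NormedAddCommGroup H] [InnerProductSpace 𝕜 H] {E : ι → Submodule 𝕜 H}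
    (hE : OrthogonalFamily 𝕜 (fun i => E i) (fun i => (E i).subtypeₗᵢ))
    (hdense : (⨆ i, E i).topologicalClosure = ⊤) (T : H →L[𝕜] H) {C : ℝ} (hC : 0 ≤ C)
    (hmaps : ∀ i, ∀ x ∈ E i, T x ∈ E i) (hbound : ∀ i, ∀ x ∈ E i, ‖T x‖ ≤ C * ‖x‖) :
    ‖T‖ ≤ C := by
  have hspan : ∀ y ∈ (⨆ i, E i : Submodule 𝕜 H), ‖T y‖ ≤ C * ‖y‖ := by
    intro y hy
    obtain ⟨f, hf, rfl⟩ := (Submodule.mem_iSup_iff_exists_finsupp E y).mp hy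
    have hpyth : ∀ g : ι → H, (∀ i, g i ∈ E i) → ‖∑ i ∈ f.support, g i‖ ^ 2 =
        ∑ i ∈ f.support, ‖g i‖ ^ 2 := fun g hg => by
      simpa using hE.norm_sum (fun i => (⟨g i, hg i⟩ : E i)) f.support
    refine le_of_sq_le_sq ?_ (by positivity)
    calc ‖T (f.sum fun _ x => x)‖ ^ 2 = ∑ i ∈ f.support, ‖T (f i)‖ ^ 2 := by
          rw [Finsupp.sum, map_sum, hpyth _ fun i => hmaps i _ (hf i)]
      _ ≤ ∑ i ∈ f.support, C ^ 2 * ‖f i‖ ^ 2 := Finset.sum_le_sum fun i _ => by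
          rw [← mul_pow]; exact pow_le_pow_left₀ (norm_nonneg _) (hbound i _ (hf i)) 2
      _ = (C * ‖f.sum fun _ x => x‖) ^ 2 := by rw [mul_pow, Finsupp.sum, hpyth _ hf, Finset.mul_sum]
  refine T.opNorm_le_bound hC fun x => ?_
  exact (Submodule.dense_iff_topologicalClosure_eq_top.mpr hdense).induction hspan
    (isClosed_le (by fun_prop) (by fun_prop)) x

lemma ContinuousLinearMap.norm_sub_algebraMap_exp_le_of_spectrum_subset_arc {H : Type*}
    [NormedAddCommGroup H] [InnerProductSpace ℂ H] [CompleteSpace H] {T : H →L[ℂ] H}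
    (hT : ∀ x, ‖T x‖ = ‖x‖) {a b : ℝ} (hab : a ≤ b)
    (hspec : spectrum ℂ T ⊆
      {z : ℂ | ∃ t : ℝ, a ≤ t ∧ t ≤ b ∧ z = Complex.exp (2 * π * Complex.I * t)}) :
    ‖T - algebraMap ℂ (H →L[ℂ] H) (Complex.exp (2 * π * Complex.I * a))‖ ≤ 2 * π * (b - a) := by
  have hunit : IsUnit T := (spectrum.zero_notMem_iff ℂ).mp fun h0 => by
    obtain ⟨t, -, -, ht⟩ := hspec h0
    exact Complex.exp_ne_zero _ ht.symm
  have : IsStarNormal T := isStarNormal_of_mem_unitary (T.mem_unitary_of_norm_map hT hunit)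
  refine IsStarNormal.norm_sub_algebraMap_le (by nlinarith [Real.pi_pos]) fun z hz => ?_
  obtain ⟨t, hat, htb, rfl⟩ := hspec hz
  calc _ ≤ 2 * π * |t - a| := norm_exp_two_pi_I_mul_sub_le a t
    _ ≤ 2 * π * (b - a) := by rw [abs_of_nonneg (by linarith)]; gcongr

lemma norm_apply_sub_exp_smul_le_of_spectrum_subset_arc {H : Type*} [NormedAddCommGroup H]
    [InnerProductSpace ℂ H] {U : H →L[ℂ] H} (hU : ∀ x, ‖U x‖ = ‖x‖) {E : Submodule ℂ H}
    [CompleteSpace E] {V : E →L[ℂ] E} (hV : ∀ y, (V y : H) = U y) {a b : ℝ} (hab : a ≤ b)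
    (hspec : spectrum ℂ V ⊆
      {z : ℂ | ∃ t : ℝ, a ≤ t ∧ t ≤ b ∧ z = Complex.exp (2 * π * Complex.I * t)})
    {x : H} (hx : x ∈ E) :
    ‖U x - Complex.exp (2 * π * Complex.I * a) • x‖ ≤ 2 * π * (b - a) * ‖x‖ := by
  have hVlam := V.norm_sub_algebraMap_exp_le_of_spectrum_subset_arc
    (fun y => (congrArg norm (hV y)).trans (hU y)) hab hspec
  calc ‖U x - Complex.exp (2 * π * Complex.I * a) • x‖
        = ‖(V - algebraMap ℂ (E →L[ℂ] E) (Complex.exp (2 * π * Complex.I * a))) ⟨x, hx⟩‖ := by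
        simp [hV, Algebra.algebraMap_eq_smul_one]
    _ ≤ 2 * π * (b - a) * ‖x‖ :=
        (ContinuousLinearMap.le_opNorm _ _).trans (mul_le_mul_of_nonneg_right hVlam (norm_nonneg _))

theorem stmt13_general {K : Type*} [NormedAddCommGroup K] [InnerProductSpace ℂ K] [CompleteSpace K]
    (U : K →L[ℂ] K)
    (hU1 : (ContinuousLinearMap.adjoint U).comp U = 1)
    (k : ℕ)
    (E : Fin k → Submodule ℂ K)
    (hclosed : ∀ j, IsClosed ((E j : Set K)))
    (horth : ∀ i j, i ≠ j → ∀ x ∈ E i, ∀ y ∈ E j, (inner ℂ x y : ℂ) = 0)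
    (hspan : (⨆ j, E j).topologicalClosure = ⊤)
    (hinv : ∀ j, ∀ x ∈ E j, U x ∈ E j)
    (V : ∀ j, ↥(E j) →L[ℂ] ↥(E j))
    (hV : ∀ j (x : ↥(E j)), ((V j x : K)) = U (x : K))
    (hspec : ∀ j, spectrum ℂ (V j) ⊆
      {z : ℂ | ∃ t : ℝ, (j : ℝ) / k ≤ t ∧ t ≤ ((j : ℝ) + 1) / k ∧
        z = Complex.exp (2 * π * Complex.I * t)})
    (D : K →L[ℂ] K)
    (hD : ∀ j, ∀ x ∈ E j, D x = Complex.exp (2 * π * Complex.I * j / k) • x) :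
    ∀ n : ℕ, ‖U ^ n - D ^ n‖ ≤ 2 * π * n / k := by
  have := fun j => (hclosed j).completeSpace_coe
  have hE : OrthogonalFamily ℂ (fun j => E j) (fun j => (E j).subtypeₗᵢ) :=
    fun i j hij x y => horth i j hij x x.2 y y.2
  have hUiso : ∀ x, ‖U x‖ = ‖x‖ := U.norm_map_iff_adjoint_comp_self.mpr hU1
  have hDE : ∀ j, ∀ x ∈ E j, D x ∈ E j := fun j x hx => hD j x hx ▸ (E j).smul_mem _ hx
  have hUD : ‖U - D‖ ≤ 2 * π / k := by
    refine (U - D).opNorm_le_of_orthogonalFamily hE hspan (by positivity)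
      (fun j x hx => (E j).sub_mem (hinv j x hx) (hDE j x hx)) fun j x hx => ?_
    have hblock := norm_apply_sub_exp_smul_le_of_spectrum_subset_arc hUiso (hV j)
      (by gcongr; linarith) (hspec j) hx
    rw [sub_apply, hD j x hx]
    convert hblock using 5 <;> push_cast <;> ring
  have hDle : ‖D‖ ≤ 1 :=
    D.opNorm_le_of_orthogonalFamily hE hspan zero_le_one hDE fun j x hx => by
      rw [hD j x hx, norm_smul]
      simp [Complex.norm_exp]
  have hUle : ‖U‖ ≤ 1 := U.opNorm_le_bound zero_le_one fun x => by rw [hUiso, one_mul]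
  intro n
  calc ‖U ^ n - D ^ n‖ ≤ n * ‖U - D‖ := norm_pow_sub_pow_le_of_norm_le_one hUle hDle n
    _ ≤ n * (2 * π / k) := by gcongr
    _ = 2 * π * n / k := by ring

/-- Let `U` be unitary on `K`, and for `0 ≤ j ≤ k−1` let `E j` be the
spectral subspace of `U` for the arc `{e^{2πit} : j/k ≤ t < (j+1)/k}` — encoded here by:
the `E j` are mutually orthogonal closed `U`-invariant subspaces with dense joint span,
and the restriction `V j` of `U` to `E j` has spectrum in the (closed) arc.  Let `D` act
as the scalar `e^{2πij/k}` on `E j`.  Then `‖Uⁿ − Dⁿ‖ ≤ 2πn/k` for all `n`. -/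
theorem stmt13 {K : Type*} [NormedAddCommGroup K] [InnerProductSpace ℂ K] [CompleteSpace K]
    (U : K →L[ℂ] K)
    (hU1 : (ContinuousLinearMap.adjoint U).comp U = 1)
    (hU2 : U.comp (ContinuousLinearMap.adjoint U) = 1)
    (k : ℕ) (hk : 1 ≤ k)
    (E : Fin k → Submodule ℂ K)
    (hclosed : ∀ j, IsClosed ((E j : Set K)))
    (horth : ∀ i j, i ≠ j → ∀ x ∈ E i, ∀ y ∈ E j, (inner ℂ x y : ℂ) = 0)
    (hspan : (⨆ j, E j).topologicalClosure = ⊤)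
    (hinv : ∀ j, ∀ x ∈ E j, U x ∈ E j)
    (V : ∀ j, ↥(E j) →L[ℂ] ↥(E j))
    (hV : ∀ j (x : ↥(E j)), ((V j x : K)) = U (x : K))
    (hspec : ∀ j, spectrum ℂ (V j) ⊆
      {z : ℂ | ∃ t : ℝ, (j : ℝ) / k ≤ t ∧ t ≤ ((j : ℝ) + 1) / k ∧
        z = Complex.exp (2 * π * Complex.I * t)})
    (D : K →L[ℂ] K)
    (hD : ∀ j, ∀ x ∈ E j, D x = Complex.exp (2 * π * Complex.I * j / k) • x) :
    ∀ n : ℕ, ‖U ^ n - D ^ n‖ ≤ 2 * π * n / k :=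
  stmt13_general U hU1 k E hclosed horth hspan hinv V hV hspec D hD
end
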